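/- arXiv:2305.03432 — 5 statements merged into one kernel-verified Lean document; each statement's English description precedes it below -/
import Mathlib

section
/- If ρ_c is an induced rule of an effect-oriented rule (ρ_b, ρ_g, ι), then ρ_b is a subrule of ρ_c via the embedding (ι_L^c, ι_K^c, ι_R^c), where ι_L^c := u ∘ ι_L^{i′}, ι_K^c := ι_K^{m}, and ι_R^c := ι_R; that is, both squares (l_b, ι_K^c, ι_L^c, l_c) and (r_b, ι_K^c, ι_R^c, r_c) commute and are pullbacks, and ac_c ≡ Shift(ι_L^c, ac_b). -/
/-! ## Finite graphs and graph morphisms -/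

/-- A finite graph: nodes, edges, source and target functions. -/
structure Gra where
  V : Type
  E : Type
  finV : Finite V
  finE : Finite E
  src : E → V
  tar : E → V

attribute [instance] Gra.finV Gra.finE

/-- A graph morphism: commutes with source and target. -/
structure GraHom (G H : Gra) where
  fV : G.V → H.V
  fE : G.E → H.E
  comm_src : ∀ e, H.src (fE e) = fV (G.src e)
  comm_tar : ∀ e, H.tar (fE e) = fV (G.tar e)

def GraHom.id (G : Gra) : GraHom G G :=
  ⟨fun v => v, fun e => e, fun _ => rfl, fun _ => rfl⟩

def GraHom.comp {G H K : Gra} (g : GraHom H K) (f : GraHom G H) : GraHom G K where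
  fV := g.fV ∘ f.fV
  fE := g.fE ∘ f.fE
  comm_src e := by simp only [Function.comp_apply, g.comm_src, f.comm_src]
  comm_tar e := by simp only [Function.comp_apply, g.comm_tar, f.comm_tar]

/-! ## Typed graphs over a fixed type graph -/

/-- A typed graph over the type graph `TG`. -/
structure TGraph (TG : Gra) where
  gr : Gra
  typ : GraHom gr TG

/-- A typed graph morphism. -/
structure THom {TG : Gra} (A B : TGraph TG) extends GraHom A.gr B.gr where
  typV : ∀ v, B.typ.fV (toGraHom.fV v) = A.typ.fV v
  typE : ∀ e, B.typ.fE (toGraHom.fE e) = A.typ.fE e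

def THom.id {TG : Gra} (A : TGraph TG) : THom A A :=
  ⟨GraHom.id A.gr, fun _ => rfl, fun _ => rfl⟩

def THom.comp {TG : Gra} {A B C : TGraph TG} (g : THom B C) (f : THom A B) : THom A C :=
  ⟨g.toGraHom.comp f.toGraHom,
   fun v => (g.typV (f.toGraHom.fV v)).trans (f.typV v),
   fun e => (g.typE (f.toGraHom.fE e)).trans (f.typE e)⟩

def THom.Injective {TG : Gra} {A B : TGraph TG} (f : THom A B) : Prop :=
  Function.Injective f.fV ∧ Function.Injective f.fE

def THom.Bijective {TG : Gra} {A B : TGraph TG} (f : THom A B) : Prop :=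
  Function.Bijective f.fV ∧ Function.Bijective f.fE

/-- The action of a typed morphism on elements (nodes and edges). -/
def THom.elem {TG : Gra} {A B : TGraph TG} (f : THom A B) :
    A.gr.V ⊕ A.gr.E → B.gr.V ⊕ B.gr.E :=
  Sum.map f.fV f.fE

/-! ## Pullback and pushout squares of typed graphs -/

/-- The square `f ∘ pa = g ∘ pb` (with apex `P`) is a pullback. -/
def IsPB {TG : Gra} {P A B C : TGraph TG} (pa : THom P A) (pb : THom P B)
    (f : THom A C) (g : THom B C) : Prop :=
  f.comp pa = g.comp pb ∧
  ∀ (X : TGraph TG) (qa : THom X A) (qb : THom X B), f.comp qa = g.comp qb →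
    ∃! h : THom X P, pa.comp h = qa ∧ pb.comp h = qb

/-- The square `ia ∘ f = ib ∘ g` (with corner object the codomain of `ia`/`ib`)
is a pushout. -/
def IsPO {TG : Gra} {P A B C : TGraph TG} (f : THom P A) (g : THom P B)
    (ia : THom A C) (ib : THom B C) : Prop :=
  ia.comp f = ib.comp g ∧
  ∀ (X : TGraph TG) (qa : THom A X) (qb : THom B X), qa.comp f = qb.comp g →
    ∃! h : THom C X, h.comp ia = qa ∧ h.comp ib = qb

/-! ## Application conditions, rules -/

/-- An application condition over `L`, given semantically: a predicate on
morphisms with domain `L`. -/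
def AppCond {TG : Gra} (L : TGraph TG) : Type 1 :=
  ∀ X : TGraph TG, THom L X → Prop

/-- Shift of an application condition along a morphism, characterized
semantically: `m ⊨ Shift(b, ac)` iff `m ∘ b ⊨ ac`. -/
def Shift {TG : Gra} {L L' : TGraph TG} (b : THom L L') (ac : AppCond L) :
    AppCond L' :=
  fun X m => ac X (m.comp b)

/-- Semantic equivalence of application conditions (on injective morphisms). -/
def CondEquiv {TG : Gra} {L : TGraph TG} (ac₁ ac₂ : AppCond L) : Prop :=
  ∀ (X : TGraph TG) (m : THom L X), m.Injective → (ac₁ X m ↔ ac₂ X m)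

/-- A rule: a span of injective typed morphisms together with an application
condition over the left-hand side. -/
structure Rule (TG : Gra) where
  L : TGraph TG
  K : TGraph TG
  R : TGraph TG
  l : THom K L
  r : THom K R
  l_inj : l.Injective
  r_inj : r.Injective
  ac : AppCond L

/-- The dangling condition for a pre-match `m` of a rule: no node of `L \ K` is
mapped to a node of `G` incident to an edge outside `m(E_L)`. -/
def Dangling {TG : Gra} (ρr : Rule TG) {G : TGraph TG} (m : THom ρr.L G) : Prop :=
  ∀ v : ρr.L.gr.V, (∀ k : ρr.K.gr.V, ρr.l.fV k ≠ v) →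
    ∀ e : G.gr.E, (G.gr.src e = m.fV v ∨ G.gr.tar e = m.fV v) →
      ∃ e' : ρr.L.gr.E, m.fE e' = e

/-- A match for a rule: an injective morphism satisfying the application
condition at which the rule is applicable (dangling condition). -/
def IsMatch {TG : Gra} (ρr : Rule TG) {G : TGraph TG} (m : THom ρr.L G) : Prop :=
  m.Injective ∧ ρr.ac G m ∧ Dangling ρr m

/-- Isomorphism of rules. -/
def RuleIso {TG : Gra} (ρ₁ ρ₂ : Rule TG) : Prop :=
  ∃ (fL : THom ρ₁.L ρ₂.L) (fK : THom ρ₁.K ρ₂.K) (fR : THom ρ₁.R ρ₂.R),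
    fL.Bijective ∧ fK.Bijective ∧ fR.Bijective ∧
    fL.comp ρ₁.l = ρ₂.l.comp fK ∧ fR.comp ρ₁.r = ρ₂.r.comp fK ∧
    CondEquiv ρ₂.ac (Shift fL ρ₁.ac)

/-! ## Effect-oriented rules -/

/-- An effect-oriented rule: a maximal rule
`ρ_g = (L_g ←l_g– K –r_g→ R_g, ac_g)` together with a base rule
`ρ_b = (L_b ←l_b– K –r_b→ R_b, ac_b)` that is a subrule of it via
`(ι_L, id, ι_R)` (the interfaces coincide, `ι_K` is the identity). -/
structure EORule (TG : Gra) where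
  K : TGraph TG
  Lb : TGraph TG
  Rb : TGraph TG
  Lg : TGraph TG
  Rg : TGraph TG
  lb : THom K Lb
  rb : THom K Rb
  lg : THom K Lg
  rg : THom K Rg
  ιL : THom Lb Lg
  ιR : THom Rb Rg
  lb_inj : lb.Injective
  rb_inj : rb.Injective
  lg_inj : lg.Injective
  rg_inj : rg.Injective
  ιL_inj : ιL.Injective
  ιR_inj : ιR.Injective
  commL : ιL.comp lb = lg
  commR : ιR.comp rb = rg
  pbL : IsPB lb (THom.id K) ιL lg
  pbR : IsPB rb (THom.id K) ιR rg
  acb : AppCond Lb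
  acg : AppCond Lg
  ac_equiv : CondEquiv acg (Shift ιL acb)

/-- An induced rule of an effect-oriented rule, given by a factorisation
`ι_L = ι_L^{m′} ∘ ι_L^{i′}` through `L_i′`, a factorisation
`r_g = r_c ∘ ι_K^{m}` through `K_c` whose square with `(r_b, ι_R)` is a
pullback, and a pushout `(L_c, u, l_c)` of `k_1 = ι_L^{i′} ∘ l_b` and
`ι_K^{m}`; the right-hand side is `R_g`. -/
structure InducedRule {TG : Gra} (ρ : EORule TG) where
  Li : TGraph TG
  ιLi : THom ρ.Lb Li
  ιLm : THom Li ρ.Lg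
  ιLi_inj : ιLi.Injective
  ιLm_inj : ιLm.Injective
  factL : ιLm.comp ιLi = ρ.ιL
  Kc : TGraph TG
  ιKm : THom ρ.K Kc
  rc : THom Kc ρ.Rg
  ιKm_inj : ιKm.Injective
  rc_inj : rc.Injective
  factR : rc.comp ιKm = ρ.rg
  pbRc : IsPB ρ.rb ιKm ρ.ιR rc
  Lc : TGraph TG
  u : THom Li Lc
  lc : THom Kc Lc
  u_inj : u.Injective
  lc_inj : lc.Injective
  po : IsPO (ιLi.comp ρ.lb) ιKm u lc

namespace InducedRule

variable {TG : Gra} {ρ : EORule TG}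

/-- `k_1 = ι_L^{i′} ∘ l_b`. -/
def k1 (c : InducedRule ρ) : THom ρ.K c.Li := c.ιLi.comp ρ.lb

/-- `ι_L^c = u ∘ ι_L^{i′}`, the embedding of `L_b` into `L_c`. -/
def ιLc (c : InducedRule ρ) : THom ρ.Lb c.Lc := c.u.comp c.ιLi

/-- The application condition of the induced rule: `ac_c = Shift(ι_L^c, ac_b)`. -/
def acc (c : InducedRule ρ) : AppCond c.Lc := Shift c.ιLc ρ.acb

/-- The induced rule as a rule `(L_c ←l_c– K_c –r_c→ R_g, ac_c)`. -/
def rule (c : InducedRule ρ) : Rule TG where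
  L := c.Lc
  K := c.Kc
  R := ρ.Rg
  l := c.lc
  r := c.rc
  l_inj := c.lc_inj
  r_inj := c.rc_inj
  ac := c.acc

/-- The size of an induced rule: `|L_i′ \ L_b| + |K_c \ K_b|`
(counting nodes and edges). -/
noncomputable def size (c : InducedRule ρ) : ℕ :=
  Nat.card {x : c.Li.gr.V ⊕ c.Li.gr.E // x ∉ Set.range c.ιLi.elem} +
  Nat.card {x : c.Kc.gr.V ⊕ c.Kc.gr.E // x ∉ Set.range c.ιKm.elem}

end InducedRule

/-! ## Double-pushout transformations -/

/-- A double-pushout (DPO) transformation `G ⟹_{ρr,m} H`. -/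
structure DPOTrafo {TG : Gra} (ρr : Rule TG) (G H : TGraph TG) where
  m : THom ρr.L G
  m_inj : m.Injective
  m_ac : ρr.ac G m
  D : TGraph TG
  d : THom ρr.K D
  g : THom D G
  h : THom D H
  n : THom ρr.R H
  po1 : IsPO ρr.l d m g
  po2 : IsPO ρr.r d n h

/-! ## Locally complete matches -/

/-- A match `m_c` for an induced rule, compatible with the pre-match
`m_b = m_c ∘ ι_L^c` for the base rule, is locally complete w.r.t. `m_b`:
no strictly larger factorisation (on the deletion or the creation side)
admits a compatible injective extension that induces an injective morphism
on the corresponding pushout object. -/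
def LocallyComplete {TG : Gra} {ρ : EORule TG} (c : InducedRule ρ)
    {G : TGraph TG} (mc : THom c.Lc G) : Prop :=
  (∀ (Li'' : TGraph TG) (iLi'' : THom ρ.Lb Li'') (iLm'' : THom Li'' ρ.Lg)
      (j : THom c.Li Li''),
      iLi''.Injective → iLm''.Injective → iLm''.comp iLi'' = ρ.ιL →
      j.Injective → ¬ j.Bijective → j.comp c.ιLi = iLi'' → iLm''.comp j = c.ιLm →
      ∀ e1' : THom Li'' G, e1'.Injective → e1'.comp iLi'' = mc.comp c.ιLc →
      ∀ (Lc'' : TGraph TG) (u'' : THom Li'' Lc'') (lc'' : THom c.Kc Lc''),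
        IsPO (iLi''.comp ρ.lb) c.ιKm u'' lc'' →
      ∀ w : THom Lc'' G, w.comp u'' = e1' → w.comp lc'' = mc.comp c.lc →
        ¬ w.Injective) ∧
  (∀ (Kc' : TGraph TG) (iKm' : THom ρ.K Kc') (rc' : THom Kc' ρ.Rg)
      (j : THom c.Kc Kc'),
      iKm'.Injective → rc'.Injective → rc'.comp iKm' = ρ.rg →
      j.Injective → ¬ j.Bijective → j.comp c.ιKm = iKm' → rc'.comp j = c.rc →
      ∀ e2' : THom Kc' G, e2'.Injective → e2'.comp iKm' = (mc.comp c.ιLc).comp ρ.lb →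
      ∀ (Lc'' : TGraph TG) (u'' : THom c.Li Lc'') (lc'' : THom Kc' Lc''),
        IsPO (c.ιLi.comp ρ.lb) iKm' u'' lc'' →
      ∀ w : THom Lc'' G, w.comp u'' = mc.comp c.u → w.comp lc'' = e2' →
        ¬ w.Injective)

/-! ## Auxiliary material for the proof -/

lemma THom_ext' {TG : Gra} {A B : TGraph TG} {f g : THom A B}
    (hV : f.fV = g.fV) (hE : f.fE = g.fE) : f = g := by
  obtain ⟨⟨fV, fE, _, _⟩, _, _⟩ := f
  obtain ⟨⟨gV, gE, _, _⟩, _, _⟩ := g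
  simp only at hV hE
  subst hV; subst hE
  rfl

namespace InducedRule

open Classical

variable {TG : Gra} {ρ : EORule TG} (c : InducedRule ρ)

/-- Map from `Kc` nodes into the concrete pushout's node set. -/
noncomputable def mapV (v : c.Kc.gr.V) :
    c.Li.gr.V ⊕ {v : c.Kc.gr.V // v ∉ Set.range c.ιKm.fV} :=
  if h : v ∈ Set.range c.ιKm.fV then Sum.inl (c.k1.fV h.choose) else Sum.inr ⟨v, h⟩

noncomputable def mapE (e : c.Kc.gr.E) :
    c.Li.gr.E ⊕ {e : c.Kc.gr.E // e ∉ Set.range c.ιKm.fE} :=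
  if h : e ∈ Set.range c.ιKm.fE then Sum.inl (c.k1.fE h.choose) else Sum.inr ⟨e, h⟩

lemma mapV_iKm (k : ρ.K.gr.V) : c.mapV (c.ιKm.fV k) = Sum.inl (c.k1.fV k) := by
  have h : c.ιKm.fV k ∈ Set.range c.ιKm.fV := ⟨k, rfl⟩
  rw [mapV, dif_pos h]
  congr 1
  exact congrArg c.k1.fV (c.ιKm_inj.1 h.choose_spec)

lemma mapE_iKm (k : ρ.K.gr.E) : c.mapE (c.ιKm.fE k) = Sum.inl (c.k1.fE k) := by
  have h : c.ιKm.fE k ∈ Set.range c.ιKm.fE := ⟨k, rfl⟩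
  rw [mapE, dif_pos h]
  congr 1
  exact congrArg c.k1.fE (c.ιKm_inj.2 h.choose_spec)

/-- The concrete pushout graph. -/
noncomputable def Qgr : Gra where
  V := c.Li.gr.V ⊕ {v : c.Kc.gr.V // v ∉ Set.range c.ιKm.fV}
  E := c.Li.gr.E ⊕ {e : c.Kc.gr.E // e ∉ Set.range c.ιKm.fE}
  finV := by infer_instance
  finE := by infer_instance
  src := fun e => match e with
    | .inl e => .inl (c.Li.gr.src e)
    | .inr e => c.mapV (c.Kc.gr.src e.1)
  tar := fun e => match e with
    | .inl e => .inl (c.Li.gr.tar e)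
    | .inr e => c.mapV (c.Kc.gr.tar e.1)

noncomputable def QtypV : (c.Qgr).V → TG.V :=
  fun v => match v with
    | .inl v => c.Li.typ.fV v
    | .inr v => c.Kc.typ.fV v.1

noncomputable def QtypE : (c.Qgr).E → TG.E :=
  fun e => match e with
    | .inl e => c.Li.typ.fE e
    | .inr e => c.Kc.typ.fE e.1

lemma QtypV_mapV (v : c.Kc.gr.V) : c.QtypV (c.mapV v) = c.Kc.typ.fV v := by
  by_cases h : v ∈ Set.range c.ιKm.fV
  · rw [mapV, dif_pos h]
    show c.Li.typ.fV (c.k1.fV h.choose) = c.Kc.typ.fV v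
    rw [c.k1.typV h.choose, ← c.ιKm.typV h.choose, h.choose_spec]
  · rw [mapV, dif_neg h]; rfl

lemma QtypE_mapE (e : c.Kc.gr.E) : c.QtypE (c.mapE e) = c.Kc.typ.fE e := by
  by_cases h : e ∈ Set.range c.ιKm.fE
  · rw [mapE, dif_pos h]
    show c.Li.typ.fE (c.k1.fE h.choose) = c.Kc.typ.fE e
    rw [c.k1.typE h.choose, ← c.ιKm.typE h.choose, h.choose_spec]
  · rw [mapE, dif_neg h]; rfl

/-- The concrete pushout typed graph. -/
noncomputable def QT : TGraph TG where
  gr := c.Qgr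
  typ :=
    { fV := c.QtypV
      fE := c.QtypE
      comm_src := by
        rintro (e | e)
        · exact c.Li.typ.comm_src e
        · show TG.src (c.Kc.typ.fE e.1) = c.QtypV (c.mapV (c.Kc.gr.src e.1))
          rw [QtypV_mapV]
          exact c.Kc.typ.comm_src e.1
      comm_tar := by
        rintro (e | e)
        · exact c.Li.typ.comm_tar e
        · show TG.tar (c.Kc.typ.fE e.1) = c.QtypV (c.mapV (c.Kc.gr.tar e.1))
          rw [QtypV_mapV]
          exact c.Kc.typ.comm_tar e.1 }

/-- The morphism `L_i' → Q`. -/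
noncomputable def uQ : THom c.Li c.QT :=
  ⟨⟨Sum.inl, Sum.inl, fun _ => rfl, fun _ => rfl⟩, fun _ => rfl, fun _ => rfl⟩

/-- The morphism `K_c → Q`. -/
noncomputable def lcQ : THom c.Kc c.QT where
  fV := c.mapV
  fE := c.mapE
  comm_src := by
    intro e
    by_cases h : e ∈ Set.range c.ιKm.fE
    · obtain ⟨k, rfl⟩ := h
      rw [mapE_iKm]
      show Sum.inl (c.Li.gr.src (c.k1.fE k)) = c.mapV (c.Kc.gr.src (c.ιKm.fE k))
      rw [c.ιKm.comm_src k, mapV_iKm, c.k1.comm_src k]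
    · rw [mapE, dif_neg h]; rfl
  comm_tar := by
    intro e
    by_cases h : e ∈ Set.range c.ιKm.fE
    · obtain ⟨k, rfl⟩ := h
      rw [mapE_iKm]
      show Sum.inl (c.Li.gr.tar (c.k1.fE k)) = c.mapV (c.Kc.gr.tar (c.ιKm.fE k))
      rw [c.ιKm.comm_tar k, mapV_iKm, c.k1.comm_tar k]
    · rw [mapE, dif_neg h]; rfl
  typV := c.QtypV_mapV
  typE := c.QtypE_mapE

lemma hQcomm : (c.uQ).comp (c.ιLi.comp ρ.lb) = (c.lcQ).comp c.ιKm := by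
  apply THom_ext'
  · funext k
    show Sum.inl (c.ιLi.fV (ρ.lb.fV k)) = c.mapV (c.ιKm.fV k)
    rw [mapV_iKm]; rfl
  · funext k
    show Sum.inl (c.ιLi.fE (ρ.lb.fE k)) = c.mapE (c.ιKm.fE k)
    rw [mapE_iKm]; rfl

/-- Key elementwise fact: the pushout square is an elementwise pullback (nodes). -/
lemma factB_V (x : ρ.Lb.gr.V) (y : c.Kc.gr.V)
    (h : c.ιLc.fV x = c.lc.fV y) : ∃ k, ρ.lb.fV k = x ∧ c.ιKm.fV k = y := by
  obtain ⟨φ, ⟨hφu, hφl⟩, -⟩ := c.po.2 c.QT c.uQ c.lcQ c.hQcomm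
  have h1 : φ.fV (c.u.fV (c.ιLi.fV x)) = Sum.inl (c.ιLi.fV x) :=
    congrArg (fun f : THom c.Li c.QT => f.fV (c.ιLi.fV x)) hφu
  have h2 : φ.fV (c.lc.fV y) = c.mapV y :=
    congrArg (fun f : THom c.Kc c.QT => f.fV y) hφl
  have h3 : Sum.inl (c.ιLi.fV x) = c.mapV y := by
    rw [← h1, ← h2]
    exact congrArg φ.fV h
  by_cases hy : y ∈ Set.range c.ιKm.fV
  · rw [mapV, dif_pos hy] at h3
    refine ⟨hy.choose, ?_, hy.choose_spec⟩
    have h4 : c.ιLi.fV x = c.k1.fV hy.choose := Sum.inl.inj h3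
    exact (c.ιLi_inj.1 h4).symm
  · rw [mapV, dif_neg hy] at h3
    exact absurd h3 (by simp)

/-- Key elementwise fact: the pushout square is an elementwise pullback (edges). -/
lemma factB_E (x : ρ.Lb.gr.E) (y : c.Kc.gr.E)
    (h : c.ιLc.fE x = c.lc.fE y) : ∃ k, ρ.lb.fE k = x ∧ c.ιKm.fE k = y := by
  obtain ⟨φ, ⟨hφu, hφl⟩, -⟩ := c.po.2 c.QT c.uQ c.lcQ c.hQcomm
  have h1 : φ.fE (c.u.fE (c.ιLi.fE x)) = Sum.inl (c.ιLi.fE x) :=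
    congrArg (fun f : THom c.Li c.QT => f.fE (c.ιLi.fE x)) hφu
  have h2 : φ.fE (c.lc.fE y) = c.mapE y :=
    congrArg (fun f : THom c.Kc c.QT => f.fE y) hφl
  have h3 : Sum.inl (c.ιLi.fE x) = c.mapE y := by
    rw [← h1, ← h2]
    exact congrArg φ.fE h
  by_cases hy : y ∈ Set.range c.ιKm.fE
  · rw [mapE, dif_pos hy] at h3
    refine ⟨hy.choose, ?_, hy.choose_spec⟩
    have h4 : c.ιLi.fE x = c.k1.fE hy.choose := Sum.inl.inj h3
    exact (c.ιLi_inj.2 h4).symm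
  · rw [mapE, dif_neg hy] at h3
    exact absurd h3 (by simp)

end InducedRule

/-- **Proposition (Base rule as subrule of induced rule).**
If `ρ_c` is an induced rule of the effect-oriented rule `(ρ_b, ρ_g, ι)`, then
`ρ_b` is a subrule of `ρ_c` via the embedding `(ι_L^c, ι_K^{m}, ι_R)`:
both squares commute and are pullbacks, and `ac_c ≡ Shift(ι_L^c, ac_b)`. -/
theorem base_rule_subrule_of_induced {TG : Gra} (ρ : EORule TG)
    (c : InducedRule ρ) :
    c.ιLc.comp ρ.lb = c.lc.comp c.ιKm ∧
    IsPB ρ.lb c.ιKm c.ιLc c.lc ∧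
    ρ.ιR.comp ρ.rb = c.rc.comp c.ιKm ∧
    IsPB ρ.rb c.ιKm ρ.ιR c.rc ∧
    CondEquiv c.acc (Shift c.ιLc ρ.acb) := by
  have hsq : c.ιLc.comp ρ.lb = c.lc.comp c.ιKm := by
    have h := c.po.1
    calc c.ιLc.comp ρ.lb = c.u.comp (c.ιLi.comp ρ.lb) := by
          apply THom_ext' <;> rfl
      _ = c.lc.comp c.ιKm := h
  refine ⟨hsq, ⟨hsq, ?_⟩, c.pbRc.1, c.pbRc, fun X m _ => Iff.rfl⟩
  intro X qa qb hq
  have hVex : ∀ x, ∃ k, ρ.lb.fV k = qa.fV x ∧ c.ιKm.fV k = qb.fV x := fun x =>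
    c.factB_V (qa.fV x) (qb.fV x)
      (congrArg (fun f : THom X c.Lc => f.fV x) hq)
  have hEex : ∀ x, ∃ k, ρ.lb.fE k = qa.fE x ∧ c.ιKm.fE k = qb.fE x := fun x =>
    c.factB_E (qa.fE x) (qb.fE x)
      (congrArg (fun f : THom X c.Lc => f.fE x) hq)
  choose kV hV1 hV2 using hVex
  choose kE hE1 hE2 using hEex
  refine ⟨⟨⟨kV, kE, ?_, ?_⟩, ?_, ?_⟩, ⟨?_, ?_⟩, ?_⟩
  · -- comm_src
    intro e
    apply c.ιKm_inj.1
    calc c.ιKm.fV (ρ.K.gr.src (kE e)) = c.Kc.gr.src (c.ιKm.fE (kE e)) :=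
          (c.ιKm.comm_src _).symm
      _ = c.Kc.gr.src (qb.fE e) := by rw [hE2 e]
      _ = qb.fV (X.gr.src e) := qb.comm_src e
      _ = c.ιKm.fV (kV (X.gr.src e)) := (hV2 _).symm
  · -- comm_tar
    intro e
    apply c.ιKm_inj.1
    calc c.ιKm.fV (ρ.K.gr.tar (kE e)) = c.Kc.gr.tar (c.ιKm.fE (kE e)) :=
          (c.ιKm.comm_tar _).symm
      _ = c.Kc.gr.tar (qb.fE e) := by rw [hE2 e]
      _ = qb.fV (X.gr.tar e) := qb.comm_tar e
      _ = c.ιKm.fV (kV (X.gr.tar e)) := (hV2 _).symm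
  · -- typV
    intro v
    calc ρ.K.typ.fV (kV v) = c.Kc.typ.fV (c.ιKm.fV (kV v)) := (c.ιKm.typV _).symm
      _ = c.Kc.typ.fV (qb.fV v) := by rw [hV2 v]
      _ = X.typ.fV v := qb.typV v
  · -- typE
    intro e
    calc ρ.K.typ.fE (kE e) = c.Kc.typ.fE (c.ιKm.fE (kE e)) := (c.ιKm.typE _).symm
      _ = c.Kc.typ.fE (qb.fE e) := by rw [hE2 e]
      _ = X.typ.fE e := qb.typE e
  · -- lb ∘ h = qa
    apply THom_ext'
    · funext x; exact hV1 x
    · funext x; exact hE1 x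
  · -- ιKm ∘ h = qb
    apply THom_ext'
    · funext x; exact hV2 x
    · funext x; exact hE2 x
  · -- uniqueness
    rintro h' ⟨-, h'2⟩
    apply THom_ext'
    · funext x
      apply c.ιKm_inj.1
      have hx : c.ιKm.fV (h'.fV x) = qb.fV x :=
        congrArg (fun f : THom X c.Kc => f.fV x) h'2
      exact hx.trans (hV2 x).symm
    · funext x
      apply c.ιKm_inj.2
      have hx : c.ιKm.fE (h'.fE x) = qb.fE x :=
        congrArg (fun f : THom X c.Kc => f.fE x) h'2
      exact hx.trans (hE2 x).symm
end

section
/- Let (ρ_b, ρ_g, ι) be an effect-oriented rule and t : G ⟹_{ρ_c, m_c} H an effect-oriented transformation via one of its induced rules ρ_c, with comatch n_c. Let x ∈ L_g \ L_b be an element representing a potential deletion, let K_b^+ be the extension of K_b with x (provided this is defined as a graph, i.e., x is a node, or x is an edge whose endpoints lie in K_b), and let ι^+ : K_b → K_b^+ be the corresponding inclusion. If there exists an injective morphism m^+ : K_b^+ → H with m^+ ∘ ι^+ = n_c ∘ ι_R ∘ r_b, then either (1) (alternative action) the element x belongs to L_c, or (2) (alternative creation) the element m^+(x) of H has a pre-image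 from R_c under n_c. -/
/-!
Suppose `x ∉ L_i′` and `m⁺(x)` has no preimage under `n_c`. Then `m⁺(x)` lies in the context
`D`, so `m⁺` lifts to `D`, and `y = g(m⁺(x))` lies outside `m_c(L_c)`. Gluing `x` onto `L_i′`
(the pushout of `L_i′ ← K_b → K_b^+`) gives a strictly larger left factorisation with an
extension match sending `x` to `y`. Because `y` avoids `m_c(L_c)`, both this extension match and
the morphism it induces on the corresponding left-hand side are injective, contradicting local
completeness.
-/

abbrev TGraph.Elem {TG : Gra} (A : TGraph TG) : Type := A.gr.V ⊕ A.gr.E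

namespace THom

variable {TG : Gra} {A B C D : TGraph TG}

@[ext]
theorem ext {f g : THom A B} (hV : f.fV = g.fV) (hE : f.fE = g.fE) : f = g := by
  obtain ⟨⟨_, _, _, _⟩, _, _⟩ := f
  obtain ⟨⟨_, _, _, _⟩, _, _⟩ := g
  cases hV
  cases hE
  rfl

theorem ext_elem {f g : THom A B} (h : ∀ s, f.elem s = g.elem s) : f = g :=
  ext (funext fun v => Sum.inl.inj (h (.inl v))) (funext fun e => Sum.inr.inj (h (.inr e)))

theorem comp_assoc (h : THom C D) (g : THom B C) (f : THom A B) :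
    (h.comp g).comp f = h.comp (g.comp f) := rfl

@[simp]
theorem elem_comp (g : THom B C) (f : THom A B) (s : A.Elem) :
    (g.comp f).elem s = g.elem (f.elem s) := by
  cases s <;> rfl

@[simp]
theorem elem_id (s : A.Elem) : (THom.id A).elem s = s := by
  cases s <;> rfl

theorem elem_congr {f g : THom A B} (h : f = g) (s : A.Elem) : f.elem s = g.elem s := h ▸ rfl

theorem injective_iff_elem {f : THom A B} : f.Injective ↔ Function.Injective f.elem :=
  Sum.map_injective.symm

theorem Bijective.surjective_elem {f : THom A B} (hf : f.Bijective) :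
    Function.Surjective f.elem :=
  Sum.map_surjective.2 ⟨hf.1.2, hf.2.2⟩

theorem Injective.comp {g : THom B C} {f : THom A B} (hg : g.Injective) (hf : f.Injective) :
    (g.comp f).Injective :=
  ⟨hg.1.comp hf.1, hg.2.comp hf.2⟩

theorem Injective.of_comp {g : THom B C} {f : THom A B} (h : (g.comp f).Injective) :
    f.Injective :=
  ⟨Function.Injective.of_comp (f := g.fV) h.1, Function.Injective.of_comp (f := g.fE) h.2⟩

theorem Injective.cancel_left {g : THom B C} (hg : g.Injective) {f₁ f₂ : THom A B}
    (h : g.comp f₁ = g.comp f₂) : f₁ = f₂ :=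
  ext_elem fun s => injective_iff_elem.1 hg <| by rw [← elem_comp, h, elem_comp]

theorem inl_mem_range_elem {f : THom A B} {v : B.gr.V} :
    Sum.inl v ∈ Set.range f.elem ↔ v ∈ Set.range f.fV := by
  constructor
  · rintro ⟨a | a, h⟩
    exacts [⟨a, Sum.inl.inj h⟩, absurd h Sum.inr_ne_inl]
  · rintro ⟨a, rfl⟩
    exact ⟨.inl a, rfl⟩

theorem inr_mem_range_elem {f : THom A B} {e : B.gr.E} :
    Sum.inr e ∈ Set.range f.elem ↔ e ∈ Set.range f.fE := by
  constructor
  · rintro ⟨a | a, h⟩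
    exacts [absurd h Sum.inl_ne_inr, ⟨a, Sum.inr.inj h⟩]
  · rintro ⟨a, rfl⟩
    exact ⟨.inr a, rfl⟩

theorem exists_comp_eq_of_range_subset {h : THom D C} (hh : h.Injective) (f : THom A C)
    (hf : ∀ s, f.elem s ∈ Set.range h.elem) : ∃ δ : THom A D, h.comp δ = f := by
  choose δV hδV using fun v => inl_mem_range_elem.1 (hf (.inl v))
  choose δE hδE using fun e => inr_mem_range_elem.1 (hf (.inr e))
  refine ⟨⟨⟨δV, δE, fun e => hh.1 ?_, fun e => hh.1 ?_⟩, fun v => ?_, fun e => ?_⟩,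
    ext (funext hδV) (funext hδE)⟩
  · rw [← h.comm_src, hδE, hδV, f.comm_src]
  · rw [← h.comm_tar, hδE, hδV, f.comm_tar]
  · rw [← h.typV, hδV, f.typV]
  · rw [← h.typE, hδE, f.typE]

theorem not_bijective_of_not_mem_range {j : THom A B} (w : THom B C) {s : B.Elem}
    (hs : w.elem s ∉ Set.range (w.comp j).elem) : ¬ j.Bijective := fun hj =>
  let ⟨a, ha⟩ := hj.surjective_elem s
  hs ⟨a, by rw [elem_comp, ha]⟩

theorem mem_range_or_eq_of_range_eq {i : THom A B} {e : THom B C} (he : e.Injective)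
    {x : C.Elem} (hrange : Set.range e.elem = Set.range (e.comp i).elem ∪ {x})
    {x' : B.Elem} (hx' : e.elem x' = x) (b : B.Elem) : b ∈ Set.range i.elem ∨ b = x' := by
  have hb : e.elem b ∈ Set.range e.elem := ⟨b, rfl⟩
  rw [hrange] at hb
  rcases hb with ⟨a, ha⟩ | hb
  · exact .inl ⟨a, injective_iff_elem.1 he (by rw [← ha, elem_comp])⟩
  · exact .inr (injective_iff_elem.1 he (hb.trans hx'.symm))

end THom

namespace GraphPushout

section Glue

variable {α β γ δ : Type} (f : α → β) (g : α → γ)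

noncomputable def glue (c : γ) : β ⊕ {c // c ∉ Set.range g} :=
  open Classical in
  if h : c ∈ Set.range g then .inl (f h.choose) else .inr ⟨c, h⟩

theorem glue_apply (hg : Function.Injective g) (p : α) : glue f g (g p) = .inl (f p) := by
  have h : g p ∈ Set.range g := ⟨p, rfl⟩
  rw [glue, dif_pos h, hg h.choose_spec]

theorem glue_of_not_mem {c : γ} (hc : c ∉ Set.range g) : glue f g c = .inr ⟨c, hc⟩ :=
  dif_neg hc

theorem elim_glue {t : β → δ} {s : γ → δ} (h : ∀ p, t (f p) = s (g p)) (c : γ) :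
    Sum.elim t (s ∘ Subtype.val) (glue f g c) = s c := by
  unfold glue
  split_ifs with hc
  exacts [(h _).trans (congrArg s hc.choose_spec), rfl]

theorem glue_injective (hf : Function.Injective f) (hg : Function.Injective g) :
    Function.Injective (glue f g) := by
  intro c c' h
  by_cases hc : c ∈ Set.range g <;> by_cases hc' : c' ∈ Set.range g
  · obtain ⟨p, rfl⟩ := hc
    obtain ⟨p', rfl⟩ := hc'
    rw [glue_apply f g hg, glue_apply f g hg] at h
    rw [hf (Sum.inl.inj h)]
  · obtain ⟨p, rfl⟩ := hc
    rw [glue_apply f g hg, glue_of_not_mem f g hc'] at h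
    exact absurd h Sum.inl_ne_inr
  · obtain ⟨p', rfl⟩ := hc'
    rw [glue_apply f g hg, glue_of_not_mem f g hc] at h
    exact absurd h Sum.inr_ne_inl
  · rw [glue_of_not_mem f g hc, glue_of_not_mem f g hc'] at h
    exact congrArg Subtype.val (Sum.inr.inj h)

theorem exists_of_glue_eq_inl (hg : Function.Injective g) {c : γ} {b : β}
    (h : glue f g c = .inl b) : ∃ p, f p = b ∧ g p = c := by
  by_cases hc : c ∈ Set.range g
  · obtain ⟨p, rfl⟩ := hc
    rw [glue_apply f g hg] at h
    exact ⟨p, Sum.inl.inj h, rfl⟩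
  · rw [glue_of_not_mem f g hc] at h
    exact absurd h Sum.inr_ne_inl

end Glue

variable {TG : Gra} {P A B X : TGraph TG} (f : THom P A) (g : THom P B)

/-- Pushout of `f` and an injective `g`: `A` plus the part of `B` outside `g(P)`. -/
noncomputable def obj : TGraph TG where
  gr :=
    { V := A.gr.V ⊕ {v // v ∉ Set.range g.fV}
      E := A.gr.E ⊕ {e // e ∉ Set.range g.fE}
      finV := inferInstance
      finE := inferInstance
      src := Sum.elim (Sum.inl ∘ A.gr.src) (glue f.fV g.fV ∘ B.gr.src ∘ Subtype.val)
      tar := Sum.elim (Sum.inl ∘ A.gr.tar) (glue f.fV g.fV ∘ B.gr.tar ∘ Subtype.val) }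
  typ :=
    { fV := Sum.elim A.typ.fV (B.typ.fV ∘ Subtype.val)
      fE := Sum.elim A.typ.fE (B.typ.fE ∘ Subtype.val)
      comm_src := by
        rintro (e | e)
        · exact A.typ.comm_src e
        · exact (B.typ.comm_src e.1).trans
            (elim_glue f.fV g.fV (fun p => (f.typV p).trans (g.typV p).symm) _).symm
      comm_tar := by
        rintro (e | e)
        · exact A.typ.comm_tar e
        · exact (B.typ.comm_tar e.1).trans
            (elim_glue f.fV g.fV (fun p => (f.typV p).trans (g.typV p).symm) _).symm }

def inl : THom A (obj f g) :=
  ⟨⟨Sum.inl, Sum.inl, fun _ => rfl, fun _ => rfl⟩, fun _ => rfl, fun _ => rfl⟩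

noncomputable def inr (hg : g.Injective) : THom B (obj f g) where
  fV := glue f.fV g.fV
  fE := glue f.fE g.fE
  comm_src := elim_glue f.fE g.fE (t := Sum.inl ∘ A.gr.src) (s := glue f.fV g.fV ∘ B.gr.src)
    fun p => by rw [Function.comp_apply, Function.comp_apply, f.comm_src, g.comm_src,
      glue_apply f.fV g.fV hg.1]
  comm_tar := elim_glue f.fE g.fE (t := Sum.inl ∘ A.gr.tar) (s := glue f.fV g.fV ∘ B.gr.tar)
    fun p => by rw [Function.comp_apply, Function.comp_apply, f.comm_tar, g.comm_tar,
      glue_apply f.fV g.fV hg.1]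
  typV := elim_glue f.fV g.fV fun p => (f.typV p).trans (g.typV p).symm
  typE := elim_glue f.fE g.fE fun p => (f.typE p).trans (g.typE p).symm

noncomputable def desc (ta : THom A X) (tb : THom B X) (hc : ta.comp f = tb.comp g) :
    THom (obj f g) X where
  fV := Sum.elim ta.fV (tb.fV ∘ Subtype.val)
  fE := Sum.elim ta.fE (tb.fE ∘ Subtype.val)
  comm_src := by
    rintro (e | e)
    · exact ta.comm_src e
    · exact (tb.comm_src e.1).trans (elim_glue f.fV g.fV (fun p => congrArg (·.fV p) hc) _).symm
  comm_tar := by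
    rintro (e | e)
    · exact ta.comm_tar e
    · exact (tb.comm_tar e.1).trans (elim_glue f.fV g.fV (fun p => congrArg (·.fV p) hc) _).symm
  typV := by
    rintro (v | v)
    exacts [ta.typV v, tb.typV v.1]
  typE := by
    rintro (e | e)
    exacts [ta.typE e, tb.typE e.1]

variable {f g}

theorem inl_injective : (inl f g).Injective :=
  ⟨Sum.inl_injective, Sum.inl_injective⟩

theorem inr_injective (hf : f.Injective) (hg : g.Injective) : (inr f g hg).Injective :=
  ⟨glue_injective f.fV g.fV hf.1 hg.1, glue_injective f.fE g.fE hf.2 hg.2⟩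

theorem elem_mem_range_or (hg : g.Injective) (s : (obj f g).Elem) :
    s ∈ Set.range (inl f g).elem ∨ s ∈ Set.range (inr f g hg).elem := by
  rcases s with (a | ⟨b, hb⟩) | (a | ⟨b, hb⟩)
  · exact .inl ⟨.inl a, rfl⟩
  · exact .inr ⟨.inl b, congrArg Sum.inl (glue_of_not_mem f.fV g.fV hb)⟩
  · exact .inl ⟨.inr a, rfl⟩
  · exact .inr ⟨.inr b, congrArg Sum.inr (glue_of_not_mem f.fE g.fE hb)⟩

theorem exists_of_inl_eq_inr (hg : g.Injective) {a : A.Elem} {b : B.Elem}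
    (h : (inl f g).elem a = (inr f g hg).elem b) : ∃ p, f.elem p = a ∧ g.elem p = b := by
  rcases a with a | a <;> rcases b with b | b
  · obtain ⟨p, rfl, rfl⟩ := exists_of_glue_eq_inl f.fV g.fV hg.1 (Sum.inl.inj h).symm
    exact ⟨.inl p, rfl, rfl⟩
  · exact absurd h Sum.inl_ne_inr
  · exact absurd h Sum.inr_ne_inl
  · obtain ⟨p, rfl, rfl⟩ := exists_of_glue_eq_inl f.fE g.fE hg.2 (Sum.inr.inj h).symm
    exact ⟨.inr p, rfl, rfl⟩

theorem hom_ext (hg : g.Injective) {w₁ w₂ : THom (obj f g) X}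
    (h₁ : w₁.comp (inl f g) = w₂.comp (inl f g))
    (h₂ : w₁.comp (inr f g hg) = w₂.comp (inr f g hg)) : w₁ = w₂ :=
  THom.ext_elem fun s => by
    rcases elem_mem_range_or hg s with ⟨a, rfl⟩ | ⟨b, rfl⟩
    · simpa using THom.elem_congr h₁ a
    · simpa using THom.elem_congr h₂ b

variable (f g) in
theorem isPO (hg : g.Injective) : IsPO f g (inl f g) (inr f g hg) := by
  refine ⟨THom.ext (funext fun p => (glue_apply f.fV g.fV hg.1 p).symm)
      (funext fun p => (glue_apply f.fE g.fE hg.2 p).symm), fun X ta tb hc => ?_⟩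
  have hdesc : (desc f g ta tb hc).comp (inr f g hg) = tb :=
    THom.ext (funext (elim_glue f.fV g.fV fun p => congrArg (·.fV p) hc))
      (funext (elim_glue f.fE g.fE fun p => congrArg (·.fE p) hc))
  exact ⟨desc f g ta tb hc, ⟨rfl, hdesc⟩, fun w ⟨h₁, h₂⟩ =>
    hom_ext hg (h₁.trans rfl) (h₂.trans hdesc.symm)⟩

end GraphPushout

namespace IsPO

open THom

variable {TG : Gra} {P A B C X : TGraph TG} {f : THom P A} {g : THom P B}
  {ia : THom A C} {ib : THom B C}

theorem exists_desc (hpo : IsPO f g ia ib) (qa : THom A X) (qb : THom B X)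
    (h : qa.comp f = qb.comp g) : ∃ w : THom C X, w.comp ia = qa ∧ w.comp ib = qb :=
  (hpo.2 X qa qb h).exists

theorem hom_ext (hpo : IsPO f g ia ib) {w₁ w₂ : THom C X} (h₁ : w₁.comp ia = w₂.comp ia)
    (h₂ : w₁.comp ib = w₂.comp ib) : w₁ = w₂ := by
  obtain ⟨_, -, hu⟩ := hpo.2 X (w₂.comp ia) (w₂.comp ib) (congrArg w₂.comp hpo.1)
  exact (hu w₁ ⟨h₁, h₂⟩).trans (hu w₂ ⟨rfl, rfl⟩).symm

theorem exists_elemEquiv (hg : g.Injective) (hpo : IsPO f g ia ib) :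
    ∃ e : (GraphPushout.obj f g).Elem ≃ C.Elem,
      (∀ a, e ((GraphPushout.inl f g).elem a) = ia.elem a) ∧
        ∀ b, e ((GraphPushout.inr f g hg).elem b) = ib.elem b := by
  have hcpo := GraphPushout.isPO f g hg
  obtain ⟨φ, hφa, hφb⟩ := hcpo.exists_desc ia ib hpo.1
  obtain ⟨ψ, hψa, hψb⟩ := hpo.exists_desc _ _ hcpo.1
  have hψφ : ψ.comp φ = THom.id _ :=
    hcpo.hom_ext (by rw [comp_assoc, hφa, hψa]; rfl) (by rw [comp_assoc, hφb, hψb]; rfl)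
  have hφψ : φ.comp ψ = THom.id C :=
    hpo.hom_ext (by rw [comp_assoc, hψa, hφa]; rfl) (by rw [comp_assoc, hψb, hφb]; rfl)
  refine ⟨⟨φ.elem, ψ.elem, fun s => ?_, fun s => ?_⟩, fun a => ?_, fun b => ?_⟩
  · rw [← elem_comp, hψφ, elem_id]
  · rw [← elem_comp, hφψ, elem_id]
  · exact (elem_comp φ _ a).symm.trans (elem_congr hφa a)
  · exact (elem_comp φ _ b).symm.trans (elem_congr hφb b)

theorem elem_mem_range_or (hpo : IsPO f g ia ib) (hg : g.Injective) (s : C.Elem) :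
    s ∈ Set.range ia.elem ∨ s ∈ Set.range ib.elem := by
  obtain ⟨e, hea, heb⟩ := hpo.exists_elemEquiv hg
  rw [← e.apply_symm_apply s]
  rcases GraphPushout.elem_mem_range_or hg (e.symm s) with ⟨a, ha⟩ | ⟨b, hb⟩
  · exact .inl ⟨a, by rw [← ha, hea]⟩
  · exact .inr ⟨b, by rw [← hb, heb]⟩

theorem ib_injective (hpo : IsPO f g ia ib) (hf : f.Injective) (hg : g.Injective) :
    ib.Injective := by
  obtain ⟨e, -, heb⟩ := hpo.exists_elemEquiv hg
  rw [injective_iff_elem, ← funext heb]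
  exact e.injective.comp (injective_iff_elem.1 (GraphPushout.inr_injective hf hg))

theorem exists_of_elem_eq (hpo : IsPO f g ia ib) (hg : g.Injective) {a : A.Elem} {b : B.Elem}
    (h : ia.elem a = ib.elem b) : ∃ p, f.elem p = a ∧ g.elem p = b := by
  obtain ⟨e, hea, heb⟩ := hpo.exists_elemEquiv hg
  exact GraphPushout.exists_of_inl_eq_inr hg (e.injective (by rw [hea, heb, h]))

theorem injective_of_injective_comp (hpo : IsPO f g ia ib) (hg : g.Injective) {w : THom C X}
    (ha : (w.comp ia).Injective) (hb : (w.comp ib).Injective)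
    (hpb : ∀ a b, w.elem (ia.elem a) = w.elem (ib.elem b) →
      ∃ p, f.elem p = a ∧ g.elem p = b) :
    w.Injective := by
  have ha' := injective_iff_elem.1 ha
  have hb' := injective_iff_elem.1 hb
  have hsq : ∀ p, ia.elem (f.elem p) = ib.elem (g.elem p) := fun p => by
    rw [← elem_comp, hpo.1, elem_comp]
  rw [injective_iff_elem]
  intro s s' h
  rcases hpo.elem_mem_range_or hg s with ⟨a, rfl⟩ | ⟨b, rfl⟩ <;>
    rcases hpo.elem_mem_range_or hg s' with ⟨a', rfl⟩ | ⟨b', rfl⟩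
  · exact congrArg ia.elem (ha' (by simpa using h))
  · obtain ⟨p, rfl, rfl⟩ := hpb a b' h
    exact hsq p
  · obtain ⟨p, rfl, rfl⟩ := hpb a' b h.symm
    exact (hsq p).symm
  · exact congrArg ib.elem (hb' (by simpa using h))

theorem elem_mem_range_or_eq (hpo : IsPO f g ia ib) (hg : g.Injective) {s₀ : B.Elem}
    (hcover : ∀ b, b ∈ Set.range g.elem ∨ b = s₀) (s : C.Elem) :
    s ∈ Set.range ia.elem ∨ s = ib.elem s₀ := by
  rcases hpo.elem_mem_range_or hg s with hs | ⟨b, rfl⟩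
  · exact .inl hs
  rcases hcover b with ⟨p, rfl⟩ | rfl
  · exact .inl ⟨f.elem p, by rw [← elem_comp, hpo.1, elem_comp]⟩
  · exact .inr rfl

theorem injective_of_extension (hpo : IsPO f g ia ib) (hg : g.Injective) {s₀ : B.Elem}
    (hcover : ∀ b, b ∈ Set.range g.elem ∨ b = s₀) {w : THom C X}
    (ha : (w.comp ia).Injective) (hb : (w.comp ib).Injective)
    (hs₀ : w.elem (ib.elem s₀) ∉ Set.range (w.comp ia).elem) : w.Injective := by
  refine hpo.injective_of_injective_comp hg ha hb fun a b h => ?_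
  rcases hcover b with ⟨p, rfl⟩ | rfl
  · refine ⟨p, injective_iff_elem.1 ha ?_, rfl⟩
    rw [elem_comp, elem_comp, ← elem_comp ia, hpo.1, elem_comp, h]
  · exact absurd ⟨a, by rw [elem_comp, h]⟩ hs₀

theorem injective_of_extend_left (hpo : IsPO f g ia ib) (hg : g.Injective) {A' C' : TGraph TG}
    {j : THom A A'} {s₀ : A'.Elem} (hcover : ∀ a, a ∈ Set.range j.elem ∨ a = s₀)
    {ia' : THom A' C'} {ib' : THom B C'} (hpo' : IsPO (j.comp f) g ia' ib')
    {m : THom C X} (hm : m.Injective) (hib : ib.Injective)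
    {e : THom A' X} (he : e.Injective) (hej : e.comp j = m.comp ia)
    (hs₀ : e.elem s₀ ∉ Set.range m.elem)
    {w : THom C' X} (hwa : w.comp ia' = e) (hwb : w.comp ib' = m.comp ib) : w.Injective := by
  refine hpo'.injective_of_injective_comp hg (hwa ▸ he) (hwb ▸ hm.comp hib) fun a b h => ?_
  rw [← elem_comp, ← elem_comp, hwa, hwb, elem_comp] at h
  rcases hcover a with ⟨a₀, rfl⟩ | rfl
  · rw [← elem_comp, hej, elem_comp] at h
    obtain ⟨p, rfl, rfl⟩ := hpo.exists_of_elem_eq hg (injective_iff_elem.1 hm h)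
    exact ⟨p, elem_comp _ _ _, rfl⟩
  · exact absurd ⟨_, h.symm⟩ hs₀

end IsPO

namespace DPOTrafo

open THom

variable {TG : Gra} {ρr : Rule TG} {G H : TGraph TG} (t : DPOTrafo ρr G H)

theorem d_injective : t.d.Injective :=
  Injective.of_comp (t.po1.1 ▸ t.m_inj.comp ρr.l_inj)

theorem g_injective : t.g.Injective := t.po1.ib_injective ρr.l_inj t.d_injective

theorem h_injective : t.h.Injective := t.po2.ib_injective ρr.r_inj t.d_injective

theorem g_elem_not_mem_range_m {z : t.D.Elem} (hz : t.h.elem z ∉ Set.range t.n.elem) :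
    t.g.elem z ∉ Set.range t.m.elem := by
  rintro ⟨s, hs⟩
  obtain ⟨p, -, rfl⟩ := t.po1.exists_of_elem_eq t.d_injective hs
  exact hz ⟨ρr.r.elem p, by rw [← elem_comp, t.po2.1, elem_comp]⟩

theorem exists_lift {K₀ Kp : TGraph TG} {i : THom K₀ Kp} {κ : THom K₀ ρr.K} {mp : THom Kp H}
    (hmp : mp.comp i = t.n.comp (ρr.r.comp κ)) {x' : Kp.Elem}
    (hcover : ∀ b, b ∈ Set.range i.elem ∨ b = x') (hx' : mp.elem x' ∈ Set.range t.h.elem) :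
    ∃ δ : THom Kp t.D, t.h.comp δ = mp ∧ δ.comp i = t.d.comp κ := by
  have hmpi : mp.comp i = t.h.comp (t.d.comp κ) := hmp.trans (congrArg (·.comp κ) t.po2.1)
  obtain ⟨δ, hδ⟩ := exists_comp_eq_of_range_subset t.h_injective mp fun b => by
    rcases hcover b with ⟨k, rfl⟩ | rfl
    · exact ⟨(t.d.comp κ).elem k, by rw [← elem_comp, ← hmpi, elem_comp]⟩
    · exact hx'
  exact ⟨δ, hδ, t.h_injective.cancel_left (by rw [← comp_assoc, hδ, hmpi])⟩

end DPOTrafo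

open THom in
theorem InducedRule.not_locallyComplete_of_extension {TG : Gra} {ρ : EORule TG}
    (c : InducedRule ρ) {G : TGraph TG} {m : THom c.Lc G} (hm : m.Injective)
    {Kp : TGraph TG} {iplus : THom ρ.K Kp} (hiplus : iplus.Injective)
    {emb : THom Kp ρ.Lg} (hemb : emb.Injective) (hcomm : emb.comp iplus = ρ.lg)
    {x' : Kp.Elem} (hcover : ∀ b, b ∈ Set.range iplus.elem ∨ b = x')
    (hx' : emb.elem x' ∉ Set.range c.ιLm.elem)
    {β : THom Kp G} (hβ : β.Injective) (hβK : β.comp iplus = m.comp (c.lc.comp c.ιKm))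
    (hβx' : β.elem x' ∉ Set.range m.elem) :
    ¬ LocallyComplete c m := by
  intro hlc
  have hpo := GraphPushout.isPO (c.ιLi.comp ρ.lb) iplus hiplus
  set j := GraphPushout.inl (c.ιLi.comp ρ.lb) iplus
  set q := GraphPushout.inr (c.ιLi.comp ρ.lb) iplus hiplus
  obtain ⟨incl, hinclj, hinclq⟩ := hpo.exists_desc c.ιLm emb
    (by rw [hcomm, ← ρ.commL, ← c.factL]; rfl)
  obtain ⟨e, hej, heβ⟩ := hpo.exists_desc (m.comp c.u) β (by rw [hβK, ← c.po.1]; rfl)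
  have hxq : incl.elem (q.elem x') ∉ Set.range (incl.comp j).elem := by
    rwa [hinclj, ← elem_comp, hinclq]
  have hincl : incl.Injective :=
    hpo.injective_of_extension hiplus hcover (hinclj ▸ c.ιLm_inj) (hinclq ▸ hemb) hxq
  have heβx' : e.elem (q.elem x') = β.elem x' := by rw [← elem_comp, heβ]
  have he : e.Injective := hpo.injective_of_extension hiplus hcover (hej ▸ hm.comp c.u_inj)
    (heβ ▸ hβ) (by
      rw [hej, heβx']
      exact fun ⟨a, ha⟩ => hβx' ⟨c.u.elem a, by rw [← ha, elem_comp]⟩)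
  have hpo' := GraphPushout.isPO (j.comp (c.ιLi.comp ρ.lb)) c.ιKm c.ιKm_inj
  obtain ⟨w, hwu, hwl⟩ := hpo'.exists_desc e (m.comp c.lc)
    (by rw [← comp_assoc, hej, comp_assoc, c.po.1]; rfl)
  have hw : w.Injective := c.po.injective_of_extend_left c.ιKm_inj
    (hpo.elem_mem_range_or_eq hiplus hcover) hpo' hm c.lc_inj he hej (heβx' ▸ hβx') hwu hwl
  exact hlc.1 _ (j.comp c.ιLi) incl j (GraphPushout.inl_injective.comp c.ιLi_inj) hincl
    (by rw [← comp_assoc, hinclj, c.factL]) GraphPushout.inl_injective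
    (not_bijective_of_not_mem_range incl hxq) rfl hinclj e he (by rw [← comp_assoc, hej]; rfl)
    _ _ _ hpo' w hwu hwl hw

theorem characterising_eo_transformations_deletion_general {TG : Gra}
    (ρ : EORule TG) (c : InducedRule ρ) (G H : TGraph TG)
    (t : DPOTrafo c.rule G H)
    (hlc : LocallyComplete c t.m)
    (x : ρ.Lg.gr.V ⊕ ρ.Lg.gr.E)
    (Kbp : TGraph TG) (iplus : THom ρ.K Kbp) (emb : THom Kbp ρ.Lg)
    (hiplus : iplus.Injective) (hemb : emb.Injective)
    (hcomm : emb.comp iplus = ρ.lg)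
    (hrange : Set.range emb.elem = Set.range ρ.lg.elem ∪ {x})
    (mplus : THom Kbp H) (hmplus : mplus.Injective)
    (hcomm2 : mplus.comp iplus = t.n.comp (ρ.ιR.comp ρ.rb)) :
    x ∈ Set.range c.ιLm.elem ∨
      ∀ x' : Kbp.gr.V ⊕ Kbp.gr.E, emb.elem x' = x →
        mplus.elem x' ∈ Set.range t.n.elem := by
  by_contra! ⟨hxm, x', rfl, hnot⟩
  have hcover := THom.mem_range_or_eq_of_range_eq hemb (hcomm ▸ hrange) rfl
  obtain ⟨z, hz⟩ := (t.po2.elem_mem_range_or t.d_injective _).resolve_left hnot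
  obtain ⟨δ, hδ, hδK⟩ := t.exists_lift (κ := c.ιKm)
    (by rw [hcomm2, ρ.commR, ← c.factR]; rfl) hcover ⟨z, hz⟩
  have hδx' : δ.elem x' = z :=
    THom.injective_iff_elem.1 t.h_injective (by rw [← THom.elem_comp, hδ, hz])
  refine c.not_locallyComplete_of_extension t.m_inj hiplus hemb hcomm hcover hxm
    (t.g_injective.comp (THom.Injective.of_comp (hδ ▸ hmplus))) ?_ ?_ hlc
  · rw [THom.comp_assoc, hδK]
    exact congrArg (·.comp c.ιKm) t.po1.1.symm
  · rw [THom.elem_comp, hδx']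
    exact t.g_elem_not_mem_range_m (hz ▸ hnot)

/-- **Theorem (Characterising effect-oriented transformations, deletion part).**
Let `(ρ_b, ρ_g, ι)` be an effect-oriented rule and `t : G ⟹_{ρ_c,m_c} H` an
effect-oriented transformation via one of its induced rules `ρ_c`, with
comatch `n_c`. Let `x ∈ L_g \ L_b` be an element representing a potential
deletion, let `K_b^+` be the extension of `K_b` with `x` (a graph extending
`K_b` that embeds into `L_g` over `l_g` with image exactly `l_g(K_b) ∪ {x}`),
and `ι^+ : K_b → K_b^+` the corresponding inclusion. If there exists an
injective morphism `m^+ : K_b^+ → H` with `m^+ ∘ ι^+ = n_c ∘ ι_R ∘ r_b`,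
then either (1) the element `x` belongs to `L_c` (i.e. lies in the image of
`L_i′` in `L_g`), or (2) the element `m^+(x)` of `H` has a pre-image from
`R_c` under `n_c`. -/
theorem characterising_eo_transformations_deletion {TG : Gra}
    (ρ : EORule TG) (c : InducedRule ρ) (G H : TGraph TG)
    (t : DPOTrafo c.rule G H)
    (hlc : LocallyComplete c t.m)
    (x : ρ.Lg.gr.V ⊕ ρ.Lg.gr.E) (hx : x ∉ Set.range ρ.ιL.elem)
    (Kbp : TGraph TG) (iplus : THom ρ.K Kbp) (emb : THom Kbp ρ.Lg)
    (hiplus : iplus.Injective) (hemb : emb.Injective)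
    (hcomm : emb.comp iplus = ρ.lg)
    (hrange : Set.range emb.elem = Set.range ρ.lg.elem ∪ {x})
    (mplus : THom Kbp H) (hmplus : mplus.Injective)
    (hcomm2 : mplus.comp iplus = t.n.comp (ρ.ιR.comp ρ.rb)) :
    x ∈ Set.range c.ιLm.elem ∨
      ∀ x' : Kbp.gr.V ⊕ Kbp.gr.E, emb.elem x' = x →
        mplus.elem x' ∈ Set.range t.n.elem :=
  characterising_eo_transformations_deletion_general ρ c G H t hlc x Kbp iplus emb hiplus hemb hcomm
    hrange mplus hmplus hcomm2
end

section
/- Given an effect-oriented rule (ρ_b, ρ_g, ι) and a pre-match m_b : L_b → G for its base rule, an induced rule ρ_c of (ρ_b, ρ_g, ι) can be matched compatibly to m_b if and only if the following three conditions hold: (1) LHS compatibility: there exists an injective morphism e_1 : L_i′ → G (a left extension match) with e_1 ∘ ι_L^{i′} = m_b; (2) RHS compatibility: there exists an injective morphism e_2 : K_c → G (a right extension match) with e_2 ∘ ι_K^{m} = m_b ∘ l_b; (3) Applicability: the unique morphism m_c : L_c → G obtained from e_1 and e_2 by the universal property of the pushout L_c (using e_2 ∘ ι_K^{m} = m_b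 ∘ l_b = e_1 ∘ k_1) is injective and satisfies the dangling condition for ρ_c. In this case, this unique morphism m_c is the match for ρ_c such that m_b and m_c are compatible. -/
theorem THom.comp_assoc_s5 {TG : Gra} {A B C D : TGraph TG}
    (h : THom C D) (g : THom B C) (f : THom A B) :
    (h.comp g).comp f = h.comp (g.comp f) := rfl

theorem THom.comp_inj {TG : Gra} {A B C : TGraph TG} {g : THom B C} {f : THom A B}
    (hg : g.Injective) (hf : f.Injective) : (g.comp f).Injective :=
  ⟨hg.1.comp hf.1, hg.2.comp hf.2⟩

/-- **Lemma (Characterising compatibility).**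
Given an effect-oriented rule `(ρ_b, ρ_g, ι)` and a pre-match
`m_b : L_b → G` for its base rule, an induced rule `ρ_c` can be matched
compatibly to `m_b` if and only if: (1) LHS compatibility: there is an
injective `e_1 : L_i′ → G` with `e_1 ∘ ι_L^{i′} = m_b`; (2) RHS
compatibility: there is an injective `e_2 : K_c → G` with
`e_2 ∘ ι_K^{m} = m_b ∘ l_b`; and (3) applicability: the unique morphism
`m_c : L_c → G` obtained from `e_1` and `e_2` by the universal property of
the pushout `L_c` is injective and satisfies the dangling condition for
`ρ_c`. In this case, this unique morphism `m_c` is the match for `ρ_c` such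
that `m_b` and `m_c` are compatible. -/
theorem characterising_compatibility {TG : Gra} (ρ : EORule TG)
    (c : InducedRule ρ) (G : TGraph TG)
    (mb : THom ρ.Lb G) (hmb_inj : mb.Injective) (hmb_ac : ρ.acb G mb) :
    ((∃ mc : THom c.Lc G, IsMatch c.rule mc ∧ mc.comp c.ιLc = mb) ↔
      (∃ (e1 : THom c.Li G) (e2 : THom c.Kc G),
        e1.Injective ∧ e1.comp c.ιLi = mb ∧
        e2.Injective ∧ e2.comp c.ιKm = mb.comp ρ.lb ∧
        ∀ mc : THom c.Lc G, mc.comp c.u = e1 → mc.comp c.lc = e2 →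
          mc.Injective ∧ Dangling c.rule mc)) ∧
    (∀ (e1 : THom c.Li G) (e2 : THom c.Kc G),
        e1.Injective → e1.comp c.ιLi = mb →
        e2.Injective → e2.comp c.ιKm = mb.comp ρ.lb →
        ∀ mc : THom c.Lc G, mc.comp c.u = e1 → mc.comp c.lc = e2 →
          mc.Injective → Dangling c.rule mc →
          (IsMatch c.rule mc ∧ mc.comp c.ιLc = mb)) := by
  have hsquare : (c.u.comp (c.ιLi.comp ρ.lb)) = c.lc.comp c.ιKm := c.po.1
  constructor
  · constructor
    · rintro ⟨mc, ⟨hinj, hac, hdang⟩, hcomp⟩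
      refine ⟨mc.comp c.u, mc.comp c.lc,
        THom.comp_inj hinj c.u_inj, ?_,
        THom.comp_inj hinj c.lc_inj, ?_, ?_⟩
      · rw [THom.comp_assoc_s5]; exact hcomp
      · rw [THom.comp_assoc_s5, ← hsquare, ← THom.comp_assoc_s5, ← THom.comp_assoc_s5]
        show (mc.comp c.ιLc).comp ρ.lb = mb.comp ρ.lb
        rw [hcomp]
      · intro mc' h1 h2
        -- use uniqueness of the pushout mediating morphism
        have hq : (mc.comp c.u).comp (c.ιLi.comp ρ.lb) = (mc.comp c.lc).comp c.ιKm := by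
          rw [THom.comp_assoc_s5, THom.comp_assoc_s5, hsquare]
        obtain ⟨h, _, huniq⟩ := c.po.2 G (mc.comp c.u) (mc.comp c.lc) hq
        have e1 : mc' = h := huniq mc' ⟨h1, h2⟩
        have e2 : mc = h := huniq mc ⟨rfl, rfl⟩
        rw [e1, ← e2]
        exact ⟨hinj, hdang⟩
    · rintro ⟨e1, e2, he1i, he1, he2i, he2, hall⟩
      have hq : e1.comp (c.ιLi.comp ρ.lb) = e2.comp c.ιKm := by
        rw [← THom.comp_assoc_s5, he1, he2]
      obtain ⟨mc, ⟨h1, h2⟩, -⟩ := c.po.2 G e1 e2 hq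
      obtain ⟨hinj, hdang⟩ := hall mc h1 h2
      have hcomp : mc.comp c.ιLc = mb := by
        show mc.comp (c.u.comp c.ιLi) = mb
        rw [← THom.comp_assoc_s5, h1, he1]
      refine ⟨mc, ⟨hinj, ?_, hdang⟩, hcomp⟩
      show ρ.acb G (mc.comp c.ιLc)
      rw [hcomp]; exact hmb_ac
  · intro e1 e2 he1i he1 he2i he2 mc h1 h2 hinj hdang
    have hcomp : mc.comp c.ιLc = mb := by
      show mc.comp (c.u.comp c.ιLi) = mb
      rw [← THom.comp_assoc_s5, h1, he1]
    refine ⟨⟨hinj, ?_, hdang⟩, hcomp⟩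
    show ρ.acb G (mc.comp c.ιLc)
    rw [hcomp]; exact hmb_ac
end

section
/- Let C be an adhesive category. Suppose the square with morphisms k_1 : K → L′, ι : K → K_c, u : L′ → L_c, l_c : K_c → L_c (with u ∘ k_1 = l_c ∘ ι) is a pushout, where k_1 and ι are monomorphisms, and let e_1 : L′ → G and e_2 : K_c → G be monomorphisms with e_1 ∘ k_1 = e_2 ∘ ι. Then the unique morphism m : L_c → G with m ∘ u = e_1 and m ∘ l_c = e_2 is a monomorphism if and only if the outer square e_1 ∘ k_1 = e_2 ∘ ι is a pullback. -/
open CategoryTheory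

open CategoryTheory.Limits in
/-- Pulling back the pushout square along any morphism `a : T ⟶ Lc` yields (by the van
Kampen property) a pushout over `T`; in particular the two projections to `T` are
jointly epimorphic, and their compositions with `a` factor through `u` and `lc`. -/
lemma aux_jointly_epi {C : Type*} [Category C] [Adhesive C]
    {K L' Kc Lc : C} {k₁ : K ⟶ L'} {ι : K ⟶ Kc} {u : L' ⟶ Lc} {lc : Kc ⟶ Lc}
    [Mono k₁] [Mono ι] (po : IsPushout k₁ ι u lc) {T : C} (a : T ⟶ Lc) :
    ∃ (P₁ P₂ : C) (p₁ : P₁ ⟶ L') (j₁ : P₁ ⟶ T) (p₂ : P₂ ⟶ Kc) (j₂ : P₂ ⟶ T),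
      j₁ ≫ a = p₁ ≫ u ∧ j₂ ≫ a = p₂ ≫ lc ∧
      ∀ {Z : C} (x y : T ⟶ Z), j₁ ≫ x = j₁ ≫ y → j₂ ≫ x = j₂ ≫ y → x = y := by
  haveI hu : Mono u := Adhesive.mono_of_isPushout_of_mono_right po
  haveI hlc : Mono lc := Adhesive.mono_of_isPushout_of_mono_left po
  haveI : HasPullback u a := Adhesive.hasPullback_of_mono_left u a
  haveI : HasPullback lc a := Adhesive.hasPullback_of_mono_left lc a
  set p₁ : pullback u a ⟶ L' := pullback.fst u a with hp₁
  set j₁ : pullback u a ⟶ T := pullback.snd u a with hj₁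
  set p₂ : pullback lc a ⟶ Kc := pullback.fst lc a with hp₂
  set j₂ : pullback lc a ⟶ T := pullback.snd lc a with hj₂
  have sX : IsPullback p₁ j₁ u a := IsPullback.of_hasPullback u a
  have sY : IsPullback p₂ j₂ lc a := IsPullback.of_hasPullback lc a
  haveI : HasPullback k₁ p₁ := Adhesive.hasPullback_of_mono_left k₁ p₁
  set q : pullback k₁ p₁ ⟶ K := pullback.fst k₁ p₁ with hq
  set r : pullback k₁ p₁ ⟶ pullback u a := pullback.snd k₁ p₁ with hr
  have sW : IsPullback q r k₁ p₁ := IsPullback.of_hasPullback k₁ p₁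
  have hι'w : (q ≫ ι) ≫ lc = (r ≫ j₁) ≫ a := by
    simp only [Category.assoc]
    rw [← po.w, ← sX.w, ← Category.assoc, ← Category.assoc, sW.w]
  set ι' : pullback k₁ p₁ ⟶ pullback lc a := sY.lift (q ≫ ι) (r ≫ j₁) hι'w with hι'
  have hfst : ι' ≫ p₂ = q ≫ ι := sY.lift_fst _ _ _
  have hsnd : ι' ≫ j₂ = r ≫ j₁ := sY.lift_snd _ _ _
  -- the outer rectangle is a pullback
  have outer : IsPullback (r ≫ j₁) q a (k₁ ≫ u) := sW.flip.paste_horiz sX.flip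
  have outer' : IsPullback (ι' ≫ j₂) q a (ι ≫ lc) := by
    rw [hsnd, ← po.w]; exact outer
  have back2 : IsPullback ι' q p₂ ι :=
    IsPullback.of_right outer' hfst sY.flip
  have vk := Adhesive.van_kampen po
  have top : IsPushout r ι' j₁ j₂ :=
    (vk r ι' j₁ j₂ q p₁ p₂ a sW.flip back2 ⟨sX.w.symm⟩ ⟨sY.w.symm⟩ ⟨hsnd.symm⟩).mpr
      ⟨sX.flip, sY.flip⟩
  exact ⟨_, _, p₁, j₁, p₂, j₂, sX.w.symm, sY.w.symm,
    fun x y h1 h2 => top.hom_ext h1 h2⟩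

/-- In an adhesive category, given a pushout square `u ∘ k₁ = l_c ∘ ι` of
monomorphisms `k₁ : K ⟶ L′` and `ι : K ⟶ K_c`, and monomorphisms
`e₁ : L′ ⟶ G`, `e₂ : K_c ⟶ G` with `e₁ ∘ k₁ = e₂ ∘ ι`, the unique morphism
`m : L_c ⟶ G` with `m ∘ u = e₁` and `m ∘ l_c = e₂` is a monomorphism if and
only if the outer square `e₁ ∘ k₁ = e₂ ∘ ι` is a pullback. -/
theorem induced_mono_iff_outer_pullback {C : Type*} [Category C] [Adhesive C]
    {K L' Kc Lc G : C} (k₁ : K ⟶ L') (ι : K ⟶ Kc) (u : L' ⟶ Lc) (lc : Kc ⟶ Lc)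
    [Mono k₁] [Mono ι]
    (po : IsPushout k₁ ι u lc)
    (e₁ : L' ⟶ G) (e₂ : Kc ⟶ G) [Mono e₁] [Mono e₂]
    (hcomm : k₁ ≫ e₁ = ι ≫ e₂)
    (m : Lc ⟶ G) (hm₁ : u ≫ m = e₁) (hm₂ : lc ≫ m = e₂) :
    Mono m ↔ IsPullback k₁ ι e₁ e₂ := by
  constructor
  · intro hm
    have pb : IsPullback k₁ ι u lc := Adhesive.isPullback_of_isPushout_of_mono_left po
    refine IsPullback.of_isLimit (Limits.PullbackCone.IsLimit.mk hcomm
      (fun s => pb.lift s.fst s.snd ?_) (fun s => pb.lift_fst _ _ _)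
      (fun s => pb.lift_snd _ _ _) ?_)
    · have h : (s.fst ≫ u) ≫ m = (s.snd ≫ lc) ≫ m := by
        rw [Category.assoc, Category.assoc, hm₁, hm₂]; exact s.condition
      exact (cancel_mono m).mp h
    · intro s t ht1 ht2
      apply pb.hom_ext
      · rw [pb.lift_fst]; exact ht1
      · rw [pb.lift_snd]; exact ht2
  · intro hpb
    -- claim A : lc is the pullback of m along e₂
    have claimA : ∀ {T : C} (x : T ⟶ Kc) (y : T ⟶ Lc), y ≫ m = x ≫ e₂ → y = x ≫ lc := by
      intro T x y hxy
      obtain ⟨P₁, P₂, p₁, j₁, p₂, j₂, h1, h2, hepi⟩ := aux_jointly_epi po y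
      apply hepi
      · -- component over L'
        have hcone : p₁ ≫ e₁ = (j₁ ≫ x) ≫ e₂ := by
          calc p₁ ≫ e₁ = p₁ ≫ u ≫ m := by rw [hm₁]
            _ = j₁ ≫ y ≫ m := by rw [← Category.assoc, ← h1, Category.assoc]
            _ = (j₁ ≫ x) ≫ e₂ := by rw [hxy, Category.assoc]
        set w := hpb.lift p₁ (j₁ ≫ x) hcone with hw
        have hw1 : w ≫ k₁ = p₁ := hpb.lift_fst _ _ _
        have hw2 : w ≫ ι = j₁ ≫ x := hpb.lift_snd _ _ _
        calc j₁ ≫ y = p₁ ≫ u := h1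
          _ = (w ≫ k₁) ≫ u := by rw [hw1]
          _ = (w ≫ ι) ≫ lc := by rw [Category.assoc, Category.assoc, po.w]
          _ = j₁ ≫ x ≫ lc := by rw [hw2, Category.assoc]
      · -- component over Kc
        have : (j₂ ≫ x) ≫ e₂ = p₂ ≫ e₂ := by
          calc (j₂ ≫ x) ≫ e₂ = j₂ ≫ y ≫ m := by rw [Category.assoc, ← hxy]
            _ = p₂ ≫ e₂ := by rw [← Category.assoc, h2, Category.assoc, hm₂]
        have hx : j₂ ≫ x = p₂ := (cancel_mono e₂).mp this
        rw [h2, ← Category.assoc, hx]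
    -- claim B : u is the pullback of m along e₁
    have claimB : ∀ {T : C} (x : T ⟶ L') (y : T ⟶ Lc), y ≫ m = x ≫ e₁ → y = x ≫ u := by
      intro T x y hxy
      obtain ⟨P₁, P₂, p₁, j₁, p₂, j₂, h1, h2, hepi⟩ := aux_jointly_epi po y
      apply hepi
      · -- component over L'
        have : (j₁ ≫ x) ≫ e₁ = p₁ ≫ e₁ := by
          calc (j₁ ≫ x) ≫ e₁ = j₁ ≫ y ≫ m := by rw [Category.assoc, ← hxy]
            _ = p₁ ≫ e₁ := by rw [← Category.assoc, h1, Category.assoc, hm₁]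
        have hx : j₁ ≫ x = p₁ := (cancel_mono e₁).mp this
        rw [h1, ← Category.assoc, hx]
      · -- component over Kc
        have hcone : (j₂ ≫ x) ≫ e₁ = p₂ ≫ e₂ := by
          calc (j₂ ≫ x) ≫ e₁ = j₂ ≫ y ≫ m := by rw [Category.assoc, ← hxy]
            _ = p₂ ≫ e₂ := by rw [← Category.assoc, h2, Category.assoc, hm₂]
        set w := hpb.lift (j₂ ≫ x) p₂ hcone with hw
        have hw1 : w ≫ k₁ = j₂ ≫ x := hpb.lift_fst _ _ _
        have hw2 : w ≫ ι = p₂ := hpb.lift_snd _ _ _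
        calc j₂ ≫ y = p₂ ≫ lc := h2
          _ = (w ≫ ι) ≫ lc := by rw [hw2]
          _ = (w ≫ k₁) ≫ u := by rw [Category.assoc, Category.assoc, po.w]
          _ = j₂ ≫ x ≫ u := by rw [hw1, Category.assoc]
    refine ⟨fun {T} x y hxy => ?_⟩
    obtain ⟨P₁, P₂, p₁, j₁, p₂, j₂, h1, h2, hepi⟩ := aux_jointly_epi po x
    apply hepi
    · have : (j₁ ≫ y) ≫ m = p₁ ≫ e₁ := by
        calc (j₁ ≫ y) ≫ m = j₁ ≫ x ≫ m := by rw [Category.assoc, ← hxy]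
          _ = p₁ ≫ e₁ := by rw [← Category.assoc, h1, Category.assoc, hm₁]
      have := claimB p₁ (j₁ ≫ y) this
      rw [this, ← h1]
    · have : (j₂ ≫ y) ≫ m = p₂ ≫ e₂ := by
        calc (j₂ ≫ y) ≫ m = j₂ ≫ x ≫ m := by rw [Category.assoc, ← hxy]
          _ = p₂ ≫ e₂ := by rw [← Category.assoc, h2, Category.assoc, hm₂]
      have := claimA p₂ (j₂ ≫ y) this
      rw [this, ← h2]
end

section
/- Let K, L′, K_c be graphs with inclusions k_1 : K → L′ and ι : K → K_c, let (L_c, u, l_c) be the pushout of k_1 and ι in the category of typed graphs, with u : L′ → L_c and l_c : K_c → L_c inclusions, and let m_c : L_c → G be an injective morphism into a graph G; set e_1 := m_c ∘ u. Then {v ∈ V_{L′} | ∃ e ∈ E_G \ e_1(E_{L′}) with src_G(e) = e_1(v) or tar_G(e) = e_1(v)} ⊆ k_1(V_K) if and only if {v ∈ V_{L_c} | ∃ e ∈ E_G \ m_c(E_{L_c}) with src_G(e) = m_c(v) or tar_G(e) = m_c(v)} ⊆ l_c(V_{K_c}). -/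
/-! ## Auxiliary: concrete pushout construction and its consequences -/

namespace DanglingAux

open Classical

theorem thom_ext {TG : Gra} {A B : TGraph TG} {f g : THom A B}
    (hV : ∀ v, f.fV v = g.fV v) (hE : ∀ e, f.fE e = g.fE e) : f = g := by
  obtain ⟨⟨fV, fE, _, _⟩, _, _⟩ := f
  obtain ⟨⟨gV, gE, _, _⟩, _, _⟩ := g
  simp only at hV hE
  have h1 : fV = gV := funext hV
  have h2 : fE = gE := funext hE
  subst h1 h2
  rfl

theorem comp_assoc {TG : Gra} {A B C D : TGraph TG}
    (h : THom C D) (g : THom B C) (f : THom A B) :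
    (h.comp g).comp f = h.comp (g.comp f) :=
  thom_ext (fun _ => rfl) (fun _ => rfl)

theorem id_comp {TG : Gra} {A B : TGraph TG} (f : THom A B) :
    (THom.id B).comp f = f :=
  thom_ext (fun _ => rfl) (fun _ => rfl)

variable {TG : Gra} {K Li Kc : TGraph TG} (k₁ : THom K Li) (ι : THom K Kc)

/-- Node part of the concrete pushout coprojection from `Kc`. -/
noncomputable def lV (v : Kc.gr.V) :
    Li.gr.V ⊕ {x : Kc.gr.V // x ∉ Set.range ι.fV} :=
  if h : ∃ y, ι.fV y = v then Sum.inl (k₁.fV h.choose)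
  else Sum.inr ⟨v, by simpa [Set.mem_range] using h⟩

/-- Edge part of the concrete pushout coprojection from `Kc`. -/
noncomputable def lE (e : Kc.gr.E) :
    Li.gr.E ⊕ {x : Kc.gr.E // x ∉ Set.range ι.fE} :=
  if h : ∃ y, ι.fE y = e then Sum.inl (k₁.fE h.choose)
  else Sum.inr ⟨e, by simpa [Set.mem_range] using h⟩

theorem lV_inl (hι : Function.Injective ι.fV) (k : K.gr.V) :
    lV k₁ ι (ι.fV k) = Sum.inl (k₁.fV k) := by
  have h : ∃ y, ι.fV y = ι.fV k := ⟨k, rfl⟩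
  unfold lV; rw [dif_pos h]
  exact congrArg Sum.inl (congrArg k₁.fV (hι h.choose_spec))

theorem lE_inl (hι : Function.Injective ι.fE) (k : K.gr.E) :
    lE k₁ ι (ι.fE k) = Sum.inl (k₁.fE k) := by
  have h : ∃ y, ι.fE y = ι.fE k := ⟨k, rfl⟩
  unfold lE; rw [dif_pos h]
  exact congrArg Sum.inl (congrArg k₁.fE (hι h.choose_spec))

theorem lV_inr (v : Kc.gr.V) (hv : v ∉ Set.range ι.fV) :
    lV k₁ ι v = Sum.inr ⟨v, hv⟩ := by
  have h : ¬ ∃ y, ι.fV y = v := by simpa [Set.mem_range] using hv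
  unfold lV; rw [dif_neg h]

theorem lE_inr (e : Kc.gr.E) (he : e ∉ Set.range ι.fE) :
    lE k₁ ι e = Sum.inr ⟨e, he⟩ := by
  have h : ¬ ∃ y, ι.fE y = e := by simpa [Set.mem_range] using he
  unfold lE; rw [dif_neg h]

/-- Typing of the concrete pushout object, node part. -/
noncomputable def pTypV : Li.gr.V ⊕ {x : Kc.gr.V // x ∉ Set.range ι.fV} → TG.V :=
  Sum.elim Li.typ.fV (fun v => Kc.typ.fV v.1)

/-- Typing of the concrete pushout object, edge part. -/
noncomputable def pTypE : Li.gr.E ⊕ {x : Kc.gr.E // x ∉ Set.range ι.fE} → TG.E :=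
  Sum.elim Li.typ.fE (fun e => Kc.typ.fE e.1)

theorem pTypV_lV (x : Kc.gr.V) : pTypV ι (lV k₁ ι x) = Kc.typ.fV x := by
  by_cases h : ∃ y, ι.fV y = x
  · obtain ⟨y, hy⟩ := h
    subst hy
    have h' : ∃ z, ι.fV z = ι.fV y := ⟨y, rfl⟩
    unfold lV; rw [dif_pos h']
    show Li.typ.fV (k₁.fV h'.choose) = Kc.typ.fV (ι.fV y)
    rw [k₁.typV, ← ι.typV h'.choose, h'.choose_spec]
  · unfold lV; rw [dif_neg h]
    rfl

theorem pTypE_lE (x : Kc.gr.E) : pTypE ι (lE k₁ ι x) = Kc.typ.fE x := by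
  by_cases h : ∃ y, ι.fE y = x
  · obtain ⟨y, hy⟩ := h
    subst hy
    have h' : ∃ z, ι.fE z = ι.fE y := ⟨y, rfl⟩
    unfold lE; rw [dif_pos h']
    show Li.typ.fE (k₁.fE h'.choose) = Kc.typ.fE (ι.fE y)
    rw [k₁.typE, ← ι.typE h'.choose, h'.choose_spec]
  · unfold lE; rw [dif_neg h]
    rfl

/-- The concrete pushout object. -/
noncomputable def P : TGraph TG where
  gr :=
    { V := Li.gr.V ⊕ {x : Kc.gr.V // x ∉ Set.range ι.fV}
      E := Li.gr.E ⊕ {x : Kc.gr.E // x ∉ Set.range ι.fE}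
      finV := inferInstance
      finE := inferInstance
      src := fun e => match e with
        | .inl e => .inl (Li.gr.src e)
        | .inr e => lV k₁ ι (Kc.gr.src e.1)
      tar := fun e => match e with
        | .inl e => .inl (Li.gr.tar e)
        | .inr e => lV k₁ ι (Kc.gr.tar e.1) }
  typ :=
    { fV := pTypV ι
      fE := pTypE ι
      comm_src := by
        rintro (e | ⟨e, he⟩)
        · exact Li.typ.comm_src e
        · show TG.src (Kc.typ.fE e) = pTypV ι (lV k₁ ι (Kc.gr.src e))
          rw [pTypV_lV, Kc.typ.comm_src]
      comm_tar := by
        rintro (e | ⟨e, he⟩)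
        · exact Li.typ.comm_tar e
        · show TG.tar (Kc.typ.fE e) = pTypV ι (lV k₁ ι (Kc.gr.tar e))
          rw [pTypV_lV, Kc.typ.comm_tar] }

/-- The concrete coprojection from `Li`. -/
noncomputable def u₀ : THom Li (P k₁ ι) where
  fV := Sum.inl
  fE := Sum.inl
  comm_src _ := rfl
  comm_tar _ := rfl
  typV _ := rfl
  typE _ := rfl

/-- The concrete coprojection from `Kc`. -/
noncomputable def lc₀ (hι : ι.Injective) : THom Kc (P k₁ ι) where
  fV := lV k₁ ι
  fE := lE k₁ ι
  comm_src e := by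
    show (P k₁ ι).gr.src (lE k₁ ι e) = lV k₁ ι (Kc.gr.src e)
    by_cases h : ∃ y, ι.fE y = e
    · obtain ⟨y, hy⟩ := h
      subst hy
      rw [lE_inl k₁ ι hι.2]
      show Sum.inl (Li.gr.src (k₁.fE y)) = _
      rw [k₁.comm_src, ι.comm_src, lV_inl k₁ ι hι.1]
    · have he : e ∉ Set.range ι.fE := by simpa [Set.mem_range] using h
      rw [lE_inr k₁ ι e he]
      rfl
  comm_tar e := by
    show (P k₁ ι).gr.tar (lE k₁ ι e) = lV k₁ ι (Kc.gr.tar e)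
    by_cases h : ∃ y, ι.fE y = e
    · obtain ⟨y, hy⟩ := h
      subst hy
      rw [lE_inl k₁ ι hι.2]
      show Sum.inl (Li.gr.tar (k₁.fE y)) = _
      rw [k₁.comm_tar, ι.comm_tar, lV_inl k₁ ι hι.1]
    · have he : e ∉ Set.range ι.fE := by simpa [Set.mem_range] using h
      rw [lE_inr k₁ ι e he]
      rfl
  typV v := by
    show (P k₁ ι).typ.fV (lV k₁ ι v) = Kc.typ.fV v
    by_cases h : ∃ y, ι.fV y = v
    · obtain ⟨y, hy⟩ := h
      subst hy
      rw [lV_inl k₁ ι hι.1]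
      show Li.typ.fV (k₁.fV y) = _
      rw [k₁.typV, ← ι.typV]
    · have hv : v ∉ Set.range ι.fV := by simpa [Set.mem_range] using h
      rw [lV_inr k₁ ι v hv]
      rfl
  typE e := by
    show (P k₁ ι).typ.fE (lE k₁ ι e) = Kc.typ.fE e
    by_cases h : ∃ y, ι.fE y = e
    · obtain ⟨y, hy⟩ := h
      subst hy
      rw [lE_inl k₁ ι hι.2]
      show Li.typ.fE (k₁.fE y) = _
      rw [k₁.typE, ← ι.typE]
    · have he : e ∉ Set.range ι.fE := by simpa [Set.mem_range] using h
      rw [lE_inr k₁ ι e he]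
      rfl

theorem po_P (hι : ι.Injective) : IsPO k₁ ι (u₀ k₁ ι) (lc₀ k₁ ι hι) := by
  constructor
  · refine thom_ext (fun v => ?_) (fun e => ?_)
    · exact ((lV_inl k₁ ι hι.1 v).symm : _)
    · exact ((lE_inl k₁ ι hι.2 e).symm : _)
  · intro X qa qb hsq
    have hsqV : ∀ k, qa.fV (k₁.fV k) = qb.fV (ι.fV k) := fun k =>
      congrArg (fun (f : THom K X) => f.fV k) hsq
    have hsqE : ∀ k, qa.fE (k₁.fE k) = qb.fE (ι.fE k) := fun k =>
      congrArg (fun (f : THom K X) => f.fE k) hsq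
    have hlVfold : ∀ v, (Sum.elim qa.fV (fun x => qb.fV x.1)) (lV k₁ ι v) = qb.fV v := by
      intro v
      by_cases h : ∃ y, ι.fV y = v
      · obtain ⟨y, hy⟩ := h
        subst hy
        rw [lV_inl k₁ ι hι.1]
        exact hsqV y
      · have hv : v ∉ Set.range ι.fV := by simpa [Set.mem_range] using h
        rw [lV_inr k₁ ι v hv]
        rfl
    have hlEfold : ∀ e, (Sum.elim qa.fE (fun x => qb.fE x.1)) (lE k₁ ι e) = qb.fE e := by
      intro e
      by_cases h : ∃ y, ι.fE y = e
      · obtain ⟨y, hy⟩ := h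
        subst hy
        rw [lE_inl k₁ ι hι.2]
        exact hsqE y
      · have he : e ∉ Set.range ι.fE := by simpa [Set.mem_range] using h
        rw [lE_inr k₁ ι e he]
        rfl
    refine ⟨⟨⟨Sum.elim qa.fV (fun x => qb.fV x.1),
              Sum.elim qa.fE (fun x => qb.fE x.1), ?_, ?_⟩, ?_, ?_⟩, ⟨?_, ?_⟩, ?_⟩
    · rintro (e | ⟨e, he⟩)
      · exact qa.comm_src e
      · show X.gr.src (qb.fE e) = Sum.elim qa.fV (fun x => qb.fV x.1) (lV k₁ ι (Kc.gr.src e))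
        rw [hlVfold, qb.comm_src]
    · rintro (e | ⟨e, he⟩)
      · exact qa.comm_tar e
      · show X.gr.tar (qb.fE e) = Sum.elim qa.fV (fun x => qb.fV x.1) (lV k₁ ι (Kc.gr.tar e))
        rw [hlVfold, qb.comm_tar]
    · rintro (v | ⟨v, hv⟩)
      · exact qa.typV v
      · exact qb.typV v
    · rintro (e | ⟨e, he⟩)
      · exact qa.typE e
      · exact qb.typE e
    · exact thom_ext (fun _ => rfl) (fun _ => rfl)
    · exact thom_ext (fun v => hlVfold v) (fun e => hlEfold e)
    · rintro h ⟨ha, hb⟩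
      refine thom_ext ?_ ?_
      · rintro (v | ⟨v, hv⟩)
        · exact congrArg (fun (f : THom Li X) => f.fV v) ha
        · have : lV k₁ ι v = Sum.inr ⟨v, hv⟩ := lV_inr k₁ ι v hv
          calc h.fV (Sum.inr ⟨v, hv⟩) = h.fV (lV k₁ ι v) := by rw [this]
          _ = qb.fV v := congrArg (fun (f : THom Kc X) => f.fV v) hb
      · rintro (e | ⟨e, he⟩)
        · exact congrArg (fun (f : THom Li X) => f.fE e) ha
        · have : lE k₁ ι e = Sum.inr ⟨e, he⟩ := lE_inr k₁ ι e he
          calc h.fE (Sum.inr ⟨e, he⟩) = h.fE (lE k₁ ι e) := by rw [this]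
          _ = qb.fE e := congrArg (fun (f : THom Kc X) => f.fE e) hb

/-- Joint surjectivity and the pullback property for an abstract pushout. -/
theorem po_transfer {Lc : TGraph TG} {u : THom Li Lc} {lc : THom Kc Lc}
    (hι : ι.Injective) (po : IsPO k₁ ι u lc) :
    (∀ v : Lc.gr.V, (∃ w, u.fV w = v) ∨ (∃ k, lc.fV k = v)) ∧
    (∀ e : Lc.gr.E, (∃ f, u.fE f = e) ∨ (∃ g, lc.fE g = e)) ∧
    (∀ a b, u.fV a = lc.fV b → ∃ k, k₁.fV k = a ∧ ι.fV k = b) := by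
  have hP := po_P k₁ ι hι
  obtain ⟨φ, ⟨hφu, hφlc⟩, _⟩ := po.2 (P k₁ ι) (u₀ k₁ ι) (lc₀ k₁ ι hι) hP.1
  obtain ⟨ψ, ⟨hψu, hψlc⟩, _⟩ := hP.2 Lc u lc po.1
  have hid : ψ.comp φ = THom.id Lc := by
    obtain ⟨θ, _, hθu⟩ := po.2 Lc u lc po.1
    have h1 : ψ.comp φ = θ := hθu _ ⟨by rw [comp_assoc, hφu, hψu],
      by rw [comp_assoc, hφlc, hψlc]⟩
    have h2 : THom.id Lc = θ := hθu _ ⟨id_comp u, id_comp lc⟩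
    rw [h1, h2]
  have hidV : ∀ v, ψ.fV (φ.fV v) = v := fun v =>
    congrArg (fun (f : THom Lc Lc) => f.fV v) hid
  have hidE : ∀ e, ψ.fE (φ.fE e) = e := fun e =>
    congrArg (fun (f : THom Lc Lc) => f.fE e) hid
  have hψuV : ∀ w, ψ.fV (Sum.inl w) = u.fV w := fun w =>
    congrArg (fun (f : THom Li Lc) => f.fV w) hψu
  have hψuE : ∀ w, ψ.fE (Sum.inl w) = u.fE w := fun w =>
    congrArg (fun (f : THom Li Lc) => f.fE w) hψu
  have hψlcV : ∀ w, ψ.fV (lV k₁ ι w) = lc.fV w := fun w =>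
    congrArg (fun (f : THom Kc Lc) => f.fV w) hψlc
  have hψlcE : ∀ w, ψ.fE (lE k₁ ι w) = lc.fE w := fun w =>
    congrArg (fun (f : THom Kc Lc) => f.fE w) hψlc
  have hφuV : ∀ w, φ.fV (u.fV w) = Sum.inl w := fun w =>
    congrArg (fun (f : THom Li (P k₁ ι)) => f.fV w) hφu
  have hφlcV : ∀ w, φ.fV (lc.fV w) = lV k₁ ι w := fun w =>
    congrArg (fun (f : THom Kc (P k₁ ι)) => f.fV w) hφlc
  refine ⟨?_, ?_, ?_⟩
  · intro v
    rcases hv : φ.fV v with w | ⟨w, hw⟩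
    · left
      exact ⟨w, by rw [← hψuV, ← hv, hidV]⟩
    · right
      refine ⟨w, ?_⟩
      rw [← hψlcV, lV_inr k₁ ι w hw, ← hv, hidV]
  · intro e
    rcases he : φ.fE e with f | ⟨f, hf⟩
    · left
      exact ⟨f, by rw [← hψuE, ← he, hidE]⟩
    · right
      refine ⟨f, ?_⟩
      rw [← hψlcE, lE_inr k₁ ι f hf, ← he, hidE]
  · intro a b hab
    have h : Sum.inl a = lV k₁ ι b := by rw [← hφuV, hab, hφlcV]
    by_cases hb : ∃ y, ι.fV y = b
    · obtain ⟨y, hy⟩ := hb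
      subst hy
      rw [lV_inl k₁ ι hι.1] at h
      exact ⟨y, (Sum.inl.inj h).symm, rfl⟩
    · have hb' : b ∉ Set.range ι.fV := by simpa [Set.mem_range] using hb
      rw [lV_inr k₁ ι b hb'] at h
      exact absurd h (by simp)

end DanglingAux

/-- **Lemma (Guaranteeing applicability, dangling-condition part).**
Let `K, L′, K_c` be typed graphs with injective morphisms (inclusions)
`k₁ : K → L′` and `ι : K → K_c`, let `(L_c, u, l_c)` be a pushout of `k₁`
and `ι` with `u` and `l_c` injective, and let `m_c : L_c → G` be an
injective morphism; set `e₁ := m_c ∘ u`. Then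
`{v ∈ V_{L′} | ∃ e ∈ E_G \ e₁(E_{L′}), src_G(e) = e₁(v) ∨ tar_G(e) = e₁(v)} ⊆ k₁(V_K)`
if and only if
`{v ∈ V_{L_c} | ∃ e ∈ E_G \ m_c(E_{L_c}), src_G(e) = m_c(v) ∨ tar_G(e) = m_c(v)} ⊆ l_c(V_{K_c})`. -/
theorem dangling_condition_pushout {TG : Gra} (K Li Kc : TGraph TG)
    (k₁ : THom K Li) (ι : THom K Kc)
    (hk₁ : k₁.Injective) (hι : ι.Injective)
    (Lc : TGraph TG) (u : THom Li Lc) (lc : THom Kc Lc)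
    (hu : u.Injective) (hlc : lc.Injective)
    (po : IsPO k₁ ι u lc)
    (G : TGraph TG) (mc : THom Lc G) (hmc : mc.Injective)
    (e₁ : THom Li G) (he₁ : e₁ = mc.comp u) :
    ((∀ v : Li.gr.V,
        (∃ e : G.gr.E, e ∉ Set.range e₁.fE ∧
          (G.gr.src e = e₁.fV v ∨ G.gr.tar e = e₁.fV v)) →
        ∃ k : K.gr.V, k₁.fV k = v) ↔
     (∀ v : Lc.gr.V,
        (∃ e : G.gr.E, e ∉ Set.range mc.fE ∧
          (G.gr.src e = mc.fV v ∨ G.gr.tar e = mc.fV v)) →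
        ∃ k : Kc.gr.V, lc.fV k = v)) := by
  obtain ⟨hsurjV, hsurjE, hpb⟩ := DanglingAux.po_transfer k₁ ι hι po
  have hsq : ∀ k, u.fV (k₁.fV k) = lc.fV (ι.fV k) := fun k =>
    congrArg (fun (f : THom K Lc) => f.fV k) po.1
  have he₁V : ∀ v, e₁.fV v = mc.fV (u.fV v) := fun v => by rw [he₁]; rfl
  have he₁E : ∀ e, e₁.fE e = mc.fE (u.fE e) := fun e => by rw [he₁]; rfl
  constructor
  · intro H v ⟨e, he, hinc⟩
    rcases hsurjV v with ⟨w, hw⟩ | ⟨k, hk⟩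
    · have he' : e ∉ Set.range e₁.fE := by
        rintro ⟨f, hf⟩
        exact he ⟨u.fE f, by rw [← hf, he₁E]⟩
      have hinc' : G.gr.src e = e₁.fV w ∨ G.gr.tar e = e₁.fV w := by
        rw [he₁V, hw]; exact hinc
      obtain ⟨k, hk⟩ := H w ⟨e, he', hinc'⟩
      exact ⟨ι.fV k, by rw [← hsq, hk, hw]⟩
    · exact ⟨k, hk⟩
  · intro H v ⟨e, he, hinc⟩
    by_cases hem : ∃ f, mc.fE f = e
    · obtain ⟨f, hf⟩ := hem
      rcases hsurjE f with ⟨f', hf'⟩ | ⟨g, hg⟩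
      · exact absurd ⟨f', by rw [he₁E, hf', hf]⟩ he
      · -- the edge comes from Kc; its endpoint in question equals u v, use pullback
        have hend : u.fV v = lc.fV (Kc.gr.src g) ∨ u.fV v = lc.fV (Kc.gr.tar g) := by
          rcases hinc with h | h
          · left
            apply hmc.1
            rw [← he₁V, ← h, ← hf, mc.comm_src, ← hg, lc.comm_src]
          · right
            apply hmc.1
            rw [← he₁V, ← h, ← hf, mc.comm_tar, ← hg, lc.comm_tar]
        rcases hend with h | h
        · obtain ⟨k, hk, _⟩ := hpb v (Kc.gr.src g) h
          exact ⟨k, hk⟩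
        · obtain ⟨k, hk, _⟩ := hpb v (Kc.gr.tar g) h
          exact ⟨k, hk⟩
    · have he' : e ∉ Set.range mc.fE := by
        rintro ⟨f, hf⟩
        exact hem ⟨f, hf⟩
      have hinc' : G.gr.src e = mc.fV (u.fV v) ∨ G.gr.tar e = mc.fV (u.fV v) := by
        rw [← he₁V]; exact hinc
      obtain ⟨k, hk⟩ := H (u.fV v) ⟨e, he', hinc'⟩
      obtain ⟨k', hk', _⟩ := hpb v k hk.symm
      exact ⟨k', hk'⟩
end
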